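/- arXiv:1105.5303 — 15 statements merged into one kernel-verified Lean document; each statement's English description precedes it below -/
import Mathlib

section
/- Let n, q, k be real constants with q ≠ 0, and let p = 0. Let g, h : (0,∞) → ℝ be continuously differentiable and define G(x,v) := x^{−2−2/q} g(v x^{2/q}) and H(x,v) := x^{−1−2/q} h(v x^{2/q}) for x > 0, v > 0. Then (G,H) satisfies the time-translation-group resolving system G_x + H G_v − G H_v = 0, G − (n−1)H/x − H_x − H H_v = −k v^{q+1} on x > 0, v > 0 if and only if for all V > 0: (h(V) + 2V/q) g′(V) − g(V) h′(V) − (2 + 2/q) g(V) = 0 and g(V) + (2 − n + 2/q) h(V) − (h(V) + 2V/q) h′(V) = −k V^{q+1}. -/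
/-!
The ansatz is invariant under the scaling `x ↦ λ x`, `v ↦ λ^(-2/q) v`, and the derivatives of
a function of scaling form `x ^ b * f (v * x ^ a)` are again of scaling form: `∂ₓ` lowers the
power of `x` by one and `∂ᵥ` raises it by `a`. Hence each residual of the resolving system at
`(x, v)` is a power of `x` times the corresponding residual of the reduced system at
`V = v * x ^ (2 / q)`, and `v ^ (q + 1) = x ^ (-2 - 2 / q) * V ^ (q + 1)`. Taking `x = 1` (so
`V = v`) gives one direction, and `V > 0` whenever `x, v > 0` gives the other.
-/

open Real Set

noncomputable section

def scalingForm (b a : ℝ) (f : ℝ → ℝ) (x v : ℝ) : ℝ := x ^ b * f (v * x ^ a)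

def resolvingResidual₁ (G H : ℝ → ℝ → ℝ) (x v : ℝ) : ℝ :=
  deriv (fun s => G s v) x + H x v * deriv (fun w => G x w) v - G x v * deriv (fun w => H x w) v

def resolvingResidual₂ (n : ℝ) (G H : ℝ → ℝ → ℝ) (x v : ℝ) : ℝ :=
  G x v - (n - 1) * H x v / x - deriv (fun s => H s v) x - H x v * deriv (fun w => H x w) v

def reducedResidual₁ (q : ℝ) (g h : ℝ → ℝ) (V : ℝ) : ℝ :=
  (h V + 2 * V / q) * deriv g V - g V * deriv h V - (2 + 2 / q) * g V

def reducedResidual₂ (n q : ℝ) (g h : ℝ → ℝ) (V : ℝ) : ℝ :=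
  g V + (2 - n + 2 / q) * h V - (h V + 2 * V / q) * deriv h V

end

section ScalingForm

variable {f : ℝ → ℝ} {a b f' v x : ℝ}

theorem hasDerivAt_scalingForm_fst (hx : 0 < x) (hf : HasDerivAt f f' (v * x ^ a)) :
    HasDerivAt (fun s => scalingForm b a f s v)
      (x ^ (b - 1) * (b * f (v * x ^ a) + a * (v * x ^ a) * f')) x := by
  have hpow : x ^ b * x ^ (a - 1) = x ^ (b - 1) * x ^ a := by
    rw [← rpow_add hx, ← rpow_add hx]
    ring_nf
  exact ((hasDerivAt_rpow_const (p := b) (Or.inl hx.ne')).mul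
    (hf.comp x ((hasDerivAt_rpow_const (p := a) (Or.inl hx.ne')).const_mul v))).congr_deriv
    (by simp only [Function.comp_apply]; linear_combination a * v * f' * hpow)

theorem hasDerivAt_scalingForm_snd (hx : 0 < x) (hf : HasDerivAt f f' (v * x ^ a)) :
    HasDerivAt (fun w => scalingForm b a f x w) (x ^ (b + a) * f') v := by
  rw [rpow_add hx]
  exact ((hf.comp v (hasDerivAt_mul_const (x ^ a))).const_mul (x ^ b)).congr_deriv (by ring)

end ScalingForm

section Residuals

variable {g h : ℝ → ℝ} {n q x v : ℝ}

theorem resolvingResidual₁_scalingForm (hx : 0 < x)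
    (hg : DifferentiableAt ℝ g (v * x ^ (2 / q)))
    (hh : DifferentiableAt ℝ h (v * x ^ (2 / q))) :
    resolvingResidual₁ (scalingForm (-2 - 2 / q) (2 / q) g) (scalingForm (-1 - 2 / q) (2 / q) h)
      x v = x ^ (-3 - 2 / q) * reducedResidual₁ q g h (v * x ^ (2 / q)) := by
  have e₁ : x ^ (-2 - 2 / q - 1) = x ^ (-3 - 2 / q) := by ring_nf
  have e₂ : x ^ (-1 - 2 / q) * x ^ (-2 - 2 / q + 2 / q) = x ^ (-3 - 2 / q) := by
    rw [← rpow_add hx]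
    ring_nf
  have e₃ : x ^ (-2 - 2 / q) * x ^ (-1 - 2 / q + 2 / q) = x ^ (-3 - 2 / q) := by
    rw [← rpow_add hx]
    ring_nf
  rw [resolvingResidual₁, (hasDerivAt_scalingForm_fst hx hg.hasDerivAt).deriv,
    (hasDerivAt_scalingForm_snd hx hg.hasDerivAt).deriv,
    (hasDerivAt_scalingForm_snd hx hh.hasDerivAt).deriv, reducedResidual₁]
  unfold scalingForm
  linear_combination
    ((-2 - 2 / q) * g (v * x ^ (2 / q)) + 2 / q * (v * x ^ (2 / q)) * deriv g (v * x ^ (2 / q)))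
      * e₁ + h (v * x ^ (2 / q)) * deriv g (v * x ^ (2 / q)) * e₂
    - g (v * x ^ (2 / q)) * deriv h (v * x ^ (2 / q)) * e₃

theorem resolvingResidual₂_scalingForm (hx : 0 < x)
    (hh : DifferentiableAt ℝ h (v * x ^ (2 / q))) :
    resolvingResidual₂ n (scalingForm (-2 - 2 / q) (2 / q) g) (scalingForm (-1 - 2 / q) (2 / q) h)
      x v = x ^ (-2 - 2 / q) * reducedResidual₂ n q g h (v * x ^ (2 / q)) := by
  have e₁ : x ^ (-1 - 2 / q) / x = x ^ (-2 - 2 / q) := by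
    rw [← rpow_sub_one hx.ne']
    ring_nf
  have e₂ : x ^ (-1 - 2 / q - 1) = x ^ (-2 - 2 / q) := by ring_nf
  have e₃ : x ^ (-1 - 2 / q) * x ^ (-1 - 2 / q + 2 / q) = x ^ (-2 - 2 / q) := by
    rw [← rpow_add hx]
    ring_nf
  rw [resolvingResidual₂, (hasDerivAt_scalingForm_fst hx hh.hasDerivAt).deriv,
    (hasDerivAt_scalingForm_snd hx hh.hasDerivAt).deriv, reducedResidual₂]
  unfold scalingForm
  linear_combination
    -(n - 1) * h (v * x ^ (2 / q)) * e₁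
    - ((-1 - 2 / q) * h (v * x ^ (2 / q)) + 2 / q * (v * x ^ (2 / q)) * deriv h (v * x ^ (2 / q)))
      * e₂
    - h (v * x ^ (2 / q)) * deriv h (v * x ^ (2 / q)) * e₃

end Residuals

theorem rpow_add_one_eq_rpow_mul_scaled {q x v : ℝ} (hq : q ≠ 0) (hx : 0 < x) (hv : 0 ≤ v) :
    v ^ (q + 1) = x ^ (-2 - 2 / q) * (v * x ^ (2 / q)) ^ (q + 1) := by
  have hexp : -2 - 2 / q + 2 / q * (q + 1) = 0 := by
    field_simp
    ring
  rw [mul_rpow hv (rpow_nonneg hx.le _), ← rpow_mul hx.le, mul_left_comm, ← rpow_add hx, hexp,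
    rpow_zero, mul_one]

theorem resolvingSystem_scalingForm_iff {g h : ℝ → ℝ} {n q k x v : ℝ} (hq : q ≠ 0)
    (hg : DifferentiableOn ℝ g (Ioi 0)) (hh : DifferentiableOn ℝ h (Ioi 0)) (hx : 0 < x)
    (hv : 0 < v) :
    (resolvingResidual₁ (scalingForm (-2 - 2 / q) (2 / q) g)
        (scalingForm (-1 - 2 / q) (2 / q) h) x v = 0 ∧
      resolvingResidual₂ n (scalingForm (-2 - 2 / q) (2 / q) g)
        (scalingForm (-1 - 2 / q) (2 / q) h) x v = -k * v ^ (q + 1)) ↔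
    (reducedResidual₁ q g h (v * x ^ (2 / q)) = 0 ∧
      reducedResidual₂ n q g h (v * x ^ (2 / q)) = -k * (v * x ^ (2 / q)) ^ (q + 1)) := by
  have hV : Ioi 0 ∈ nhds (v * x ^ (2 / q)) := Ioi_mem_nhds (mul_pos hv (rpow_pos_of_pos hx _))
  rw [resolvingResidual₁_scalingForm hx (hg.differentiableAt hV) (hh.differentiableAt hV),
    resolvingResidual₂_scalingForm hx (hh.differentiableAt hV),
    rpow_add_one_eq_rpow_mul_scaled hq hx hv.le, mul_left_comm,
    mul_eq_zero_iff_left (rpow_pos_of_pos hx _).ne', mul_right_inj' (rpow_pos_of_pos hx _).ne']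

/-- Scaling-invariant reduction (`p = 0`): `(G,H)` of scaling-invariant form solves the
time-translation-group resolving system iff `(g,h)` solves the reduced ODE system. -/
theorem scaling_invariant_reduction
    (n q k : ℝ) (hq : q ≠ 0)
    (g h : ℝ → ℝ)
    (hg : ContDiffOn ℝ 1 g (Set.Ioi 0)) (hh : ContDiffOn ℝ 1 h (Set.Ioi 0))
    (G H : ℝ → ℝ → ℝ)
    (hGdef : ∀ x v : ℝ, G x v = x ^ (-2 - 2 / q) * g (v * x ^ (2 / q)))
    (hHdef : ∀ x v : ℝ, H x v = x ^ (-1 - 2 / q) * h (v * x ^ (2 / q))) :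
    (∀ x v : ℝ, 0 < x → 0 < v →
      (deriv (fun s => G s v) x + H x v * deriv (fun w => G x w) v
          - G x v * deriv (fun w => H x w) v = 0 ∧
        G x v - (n - 1) * H x v / x - deriv (fun s => H s v) x
          - H x v * deriv (fun w => H x w) v = -k * v ^ (q + 1))) ↔
    (∀ V : ℝ, 0 < V →
      ((h V + 2 * V / q) * deriv g V - g V * deriv h V - (2 + 2 / q) * g V = 0 ∧
        g V + (2 - n + 2 / q) * h V - (h V + 2 * V / q) * deriv h V
          = -k * V ^ (q + 1))) := by
  obtain rfl : G = scalingForm (-2 - 2 / q) (2 / q) g := funext fun x => funext (hGdef x)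
  obtain rfl : H = scalingForm (-1 - 2 / q) (2 / q) h := funext fun x => funext (hHdef x)
  have hg' := hg.differentiableOn one_ne_zero
  have hh' := hh.differentiableOn one_ne_zero
  refine ⟨fun hPDE V hV => ?_, fun hODE x v hx hv => ?_⟩
  · simpa only [one_rpow, mul_one, reducedResidual₁, reducedResidual₂] using
      (resolvingSystem_scalingForm_iff hq hg' hh' one_pos hV).1 (hPDE 1 V one_pos hV)
  · exact (resolvingSystem_scalingForm_iff hq hg' hh' hx hv).2
      (hODE _ (mul_pos hv (rpow_pos_of_pos hx _)))
end

section
/- Let n, k be real constants with n ≠ 2, n ≠ 3, and k(n−2)/(n−3) > 0, let p = 0 and q = 2/(2−n), and let ε ∈ {1, −1}. Define for x > 0, v > 0: G(x,v) := ε (4−n) (k(n−2)/(n−3))^{1/2} v^{(n−3)/(n−2)} / x and H(x,v) := ε (k(n−2)/(n−3))^{1/2} v^{(n−3)/(n−2)} + (2−n) v / x. Then (G,H) satisfies the time-translation-group resolving system G_x + H G_v − G H_v = 0 and G − (n−1)H/x − H_x − H H_v = −k v^{q+1} for all x > 0, v > 0. -/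
/-!
Write `c = ε √(k(n-2)/(n-3))` and `α = (n-3)/(n-2)`. For every `c` and every exponent `α` with
`(2-n)(α-1) = 1`, the pair `G = (4-n) c v^α / x`, `H = c v^α + (2-n) v / x` satisfies the first
equation exactly, while the left-hand side of the second one collapses to `-c² α v^(2α-1)`: the terms
in `v^α / x` and in `v / x²` cancel by the constraint on `α`. The choice of `c` makes `c² α = k`,
and `q = 2/(2-n)` makes `q + 1 = 2α - 1`.
-/

open Real

noncomputable section

namespace ScalingSolution

variable (n α c : ℝ)

def G (x v : ℝ) : ℝ := (4 - n) * c * v ^ α / x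

def H (x v : ℝ) : ℝ := c * v ^ α + (2 - n) * v / x

variable {n α c}

lemma deriv_G_fst {x : ℝ} (v : ℝ) (hx : x ≠ 0) :
    deriv (fun s => G n α c s v) x = -G n α c x v / x := by
  have h : HasDerivAt (fun s => G n α c s v) ((4 - n) * c * v ^ α * -(x ^ 2)⁻¹) x := by
    simpa only [G, div_eq_mul_inv] using (hasDerivAt_inv hx).const_mul ((4 - n) * c * v ^ α)
  rw [h.deriv, G]
  field_simp

lemma deriv_G_snd (x : ℝ) {v : ℝ} (hv : v ≠ 0) :
    deriv (fun w => G n α c x w) v = α * G n α c x v / v := by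
  have h : HasDerivAt (fun w => G n α c x w) ((4 - n) * c * (α * v ^ (α - 1)) / x) v :=
    ((hasDerivAt_rpow_const (Or.inl hv)).const_mul ((4 - n) * c)).div_const x
  rw [h.deriv, G, rpow_sub_one hv]
  ring

lemma deriv_H_fst {x : ℝ} (v : ℝ) (hx : x ≠ 0) :
    deriv (fun s => H n α c s v) x = -((2 - n) * v) / x ^ 2 := by
  have h : HasDerivAt (fun s => H n α c s v) ((2 - n) * v * -(x ^ 2)⁻¹) x := by
    simpa only [H, div_eq_mul_inv] using
      ((hasDerivAt_inv hx).const_mul ((2 - n) * v)).const_add (c * v ^ α)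
  rw [h.deriv]
  ring

lemma deriv_H_snd (x : ℝ) {v : ℝ} (hv : v ≠ 0) :
    deriv (fun w => H n α c x w) v = α * c * v ^ α / v + (2 - n) / x := by
  have h : HasDerivAt (fun w => H n α c x w) (c * (α * v ^ (α - 1)) + (2 - n) * 1 / x) v :=
    ((hasDerivAt_rpow_const (Or.inl hv)).const_mul c).add
      (((hasDerivAt_id v).const_mul (2 - n)).div_const x)
  rw [h.deriv, rpow_sub_one hv]
  ring

theorem first_equation (hα : (2 - n) * (α - 1) = 1) {x v : ℝ} (hx : x ≠ 0) (hv : v ≠ 0) :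
    deriv (fun s => G n α c s v) x + H n α c x v * deriv (fun w => G n α c x w) v
      - G n α c x v * deriv (fun w => H n α c x w) v = 0 := by
  rw [deriv_G_fst v hx, deriv_G_snd x hv, deriv_H_snd x hv]
  simp only [G, H]
  field_simp
  linear_combination (4 - n) * c * v ^ α * v * hα

theorem second_equation (hα : (2 - n) * (α - 1) = 1) {x v : ℝ} (hx : x ≠ 0) (hv : v ≠ 0) :
    G n α c x v - (n - 1) * H n α c x v / x - deriv (fun s => H n α c s v) x
      - H n α c x v * deriv (fun w => H n α c x w) v = -(c ^ 2 * α) * (v ^ α * v ^ α / v) := by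
  rw [deriv_H_fst v hx, deriv_H_snd x hv]
  simp only [G, H]
  field_simp
  linear_combination (-(c * v ^ α * x * v)) * hα

end ScalingSolution

end

theorem resolving_solution_scaling_general
    (n k q ε : ℝ)
    (hn2 : n ≠ 2) (hn3 : n ≠ 3) (hk : 0 < k * (n - 2) / (n - 3))
    (hq : q = 2 / (2 - n))
    (hε : ε = 1 ∨ ε = -1)
    (G H : ℝ → ℝ → ℝ)
    (hGdef : ∀ x v : ℝ, G x v =
      ε * (4 - n) * Real.sqrt (k * (n - 2) / (n - 3)) * v ^ ((n - 3) / (n - 2)) / x)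
    (hHdef : ∀ x v : ℝ, H x v =
      ε * Real.sqrt (k * (n - 2) / (n - 3)) * v ^ ((n - 3) / (n - 2)) + (2 - n) * v / x) :
    ∀ x v : ℝ, 0 < x → 0 < v →
      deriv (fun s => G s v) x + H x v * deriv (fun w => G x w) v
        - G x v * deriv (fun w => H x w) v = 0 ∧
      G x v - (n - 1) * H x v / x - deriv (fun s => H s v) x
        - H x v * deriv (fun w => H x w) v = -k * v ^ (q + 1) := by
  intro x v hx hv
  have hn2' : n - 2 ≠ 0 := sub_ne_zero.mpr hn2
  have hn3' : n - 3 ≠ 0 := sub_ne_zero.mpr hn3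
  set α := (n - 3) / (n - 2) with hαdef
  set c := ε * √(k * (n - 2) / (n - 3))
  have hα : (2 - n) * (α - 1) = 1 := by rw [hαdef]; field_simp; ring
  have hc : c ^ 2 * α = k := by
    have hε2 : ε ^ 2 = 1 := by rcases hε with rfl | rfl <;> norm_num
    rw [mul_pow, hε2, sq_sqrt hk.le, hαdef]
    field_simp
  have hpow : v ^ (q + 1) = v ^ α * v ^ α / v := by
    have hq1 : q + 1 = α + α - 1 := by
      rw [hq, hαdef]
      field_simp [show (2 : ℝ) - n ≠ 0 from fun h => hn2' (by linarith)]
      ring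
    rw [hq1, rpow_sub_one hv.ne', rpow_add hv]
  have hG : G = ScalingSolution.G n α c := by
    funext x v; rw [hGdef, ScalingSolution.G]; ring
  have hH : H = ScalingSolution.H n α c := funext fun x => funext (hHdef x)
  subst hG hH
  refine ⟨ScalingSolution.first_equation hα hx.ne' hv.ne', ?_⟩
  rw [ScalingSolution.second_equation hα hx.ne' hv.ne', hpow, hc]

/-- Explicit scaling-invariant solution of the time-translation-group resolving system
for `p = 0`, `q = 2/(2-n)`, `n ≠ 2,3`. -/
theorem resolving_solution_scaling
    (n k p q ε : ℝ)
    (hn2 : n ≠ 2) (hn3 : n ≠ 3) (hk : 0 < k * (n - 2) / (n - 3))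
    (hp : p = 0) (hq : q = 2 / (2 - n))
    (hε : ε = 1 ∨ ε = -1)
    (G H : ℝ → ℝ → ℝ)
    (hGdef : ∀ x v : ℝ, G x v =
      ε * (4 - n) * Real.sqrt (k * (n - 2) / (n - 3)) * v ^ ((n - 3) / (n - 2)) / x)
    (hHdef : ∀ x v : ℝ, H x v =
      ε * Real.sqrt (k * (n - 2) / (n - 3)) * v ^ ((n - 3) / (n - 2)) + (2 - n) * v / x) :
    ∀ x v : ℝ, 0 < x → 0 < v →
      deriv (fun s => G s v) x + H x v * deriv (fun w => G x w) v
        - G x v * deriv (fun w => H x w) v = 0 ∧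
      G x v - (n - 1) * H x v / x - deriv (fun s => H s v) x
        - H x v * deriv (fun w => H x w) v = -k * v ^ (q + 1) :=
  resolving_solution_scaling_general n k q ε hn2 hn3 hk hq hε G H hGdef hHdef
end

section
/- Let p, q, k be real constants with p > 0, k > 0, q + 2 > 0, q ≠ 0, q ≠ −1, let n = 1, and let ε ∈ {1, −1}. Define for x > 0, v > 0: G(x,v) := ((q+4)/(q+2)) (p v + (p k)^{1/2} v^{1+q/2}) and H(x,v) := ε ((2p/(q+2))^{1/2} v + (2k/(q+2))^{1/2} v^{1+q/2}). Then (G,H) satisfies the time-translation-group resolving system G_x + H G_v − G H_v = 0 and G − H_x − H H_v = (p − k v^q) v for all x > 0, v > 0. -/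
/-! Neither `G` nor `H` depends on `x`, so the system reduces to two identities in `v`. Writing
`s = v ^ (q / 2)`, both sides are polynomials in `v` and `s` once `v ^ (1 + q / 2) = v s` and
`v ^ q = s²`, and the coefficients `a = √(2p/(q+2))`, `b = √(2k/(q+2))`, `c = √(pk)` enter only
through `a² (q+2) = 2p`, `b² (q+2) = 2k` and `a b (q+2) = 2c`; the first equation of the
system then reduces to `a c = p b`. -/

open Real

section Coefficients

variable {p k q : ℝ}

lemma sq_sqrt_two_mul_div_mul (hp : 0 ≤ p) (hq2 : 0 < q + 2) :
    √(2 * p / (q + 2)) ^ 2 * (q + 2) = 2 * p := by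
  rw [sq_sqrt (by positivity)]
  field_simp

lemma sqrt_two_mul_div_mul_sqrt_two_mul_div (hp : 0 ≤ p) (hq2 : 0 < q + 2) :
    √(2 * p / (q + 2)) * √(2 * k / (q + 2)) * (q + 2) = 2 * √(p * k) := by
  have hsq : 2 * p / (q + 2) * (2 * k / (q + 2)) = (2 / (q + 2)) ^ 2 * (p * k) := by
    field_simp
  rw [← sqrt_mul (by positivity), hsq, sqrt_mul (sq_nonneg _), sqrt_sq (by positivity)]
  field_simp

end Coefficients

lemma hasDerivAt_mul_add_mul_rpow_one_add (α β m : ℝ) {v : ℝ} (hv : 0 < v) :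
    HasDerivAt (fun w => α * w + β * w ^ (1 + m)) (α + β * ((1 + m) * v ^ m)) v := by
  have hpow := hasDerivAt_rpow_const (p := 1 + m) (Or.inl hv.ne')
  rw [add_sub_cancel_left] at hpow
  simpa using ((hasDerivAt_id' v).const_mul α).fun_add (hpow.const_mul β)

lemma translation_resolving_identities {p k q a b c ε v s : ℝ} (hq2 : q + 2 ≠ 0)
    (hε : ε ^ 2 = 1) (ha : a ^ 2 * (q + 2) = 2 * p) (hb : b ^ 2 * (q + 2) = 2 * k)
    (hab : a * b * (q + 2) = 2 * c) :
    ε * (a * v + b * (v * s)) * ((q + 4) / (q + 2) * (p + c * ((1 + q / 2) * s)))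
        - (q + 4) / (q + 2) * (p * v + c * (v * s)) * (ε * (a + b * ((1 + q / 2) * s))) = 0 ∧
      (q + 4) / (q + 2) * (p * v + c * (v * s))
        - ε * (a * v + b * (v * s)) * (ε * (a + b * ((1 + q / 2) * s)))
        = (p - k * (s * s)) * v := by
  have hac : a * c = p * b := by linear_combination (b * ha - a * hab) / 2
  constructor
  · field_simp
    linear_combination (ε * (q + 4) * v * s * q) * hac
  · field_simp
    linear_combination (-v * (q + 2) * (a + b * s) * (2 * a + b * (2 + q) * s)) * hε
      - 2 * v * ha - v * s * (q + 4) * hab - v * s * s * (q + 2) * hb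

theorem resolving_solution_trans_plus_general
    (p q k ε : ℝ)
    (hp : 0 < p) (hk : 0 < k) (hq2 : 0 < q + 2)
    (hε : ε = 1 ∨ ε = -1)
    (G H : ℝ → ℝ → ℝ)
    (hGdef : ∀ x v : ℝ, G x v =
      ((q + 4) / (q + 2)) * (p * v + Real.sqrt (p * k) * v ^ (1 + q / 2)))
    (hHdef : ∀ x v : ℝ, H x v =
      ε * (Real.sqrt (2 * p / (q + 2)) * v + Real.sqrt (2 * k / (q + 2)) * v ^ (1 + q / 2))) :
    ∀ x v : ℝ, 0 < x → 0 < v →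
      deriv (fun s => G s v) x + H x v * deriv (fun w => G x w) v
        - G x v * deriv (fun w => H x w) v = 0 ∧
      G x v - deriv (fun s => H s v) x - H x v * deriv (fun w => H x w) v
        = (p - k * v ^ q) * v := by
  intro x v _ hv
  have hGx : deriv (fun s => G s v) x = 0 := by simp only [hGdef, deriv_const]
  have hHx : deriv (fun s => H s v) x = 0 := by simp only [hHdef, deriv_const]
  have hGv : deriv (fun w => G x w) v = (q + 4) / (q + 2)
      * (p + √(p * k) * ((1 + q / 2) * v ^ (q / 2))) := by
    simp only [hGdef]
    exact ((hasDerivAt_mul_add_mul_rpow_one_add _ _ _ hv).const_mul _).deriv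
  have hHv : deriv (fun w => H x w) v =
      ε * (√(2 * p / (q + 2)) + √(2 * k / (q + 2)) * ((1 + q / 2) * v ^ (q / 2))) := by
    simp only [hHdef]
    exact ((hasDerivAt_mul_add_mul_rpow_one_add _ _ _ hv).const_mul _).deriv
  have hpow : v ^ (1 + q / 2) = v * v ^ (q / 2) := by rw [rpow_add hv, rpow_one]
  have hpow2 : v ^ q = v ^ (q / 2) * v ^ (q / 2) := by rw [← rpow_add hv, add_halves]
  rw [hGx, hHx, hGv, hHv, hGdef, hHdef, hpow, hpow2, zero_add, sub_zero]
  exact translation_resolving_identities hq2.ne' (by rcases hε with rfl | rfl <;> norm_num)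
    (sq_sqrt_two_mul_div_mul hp.le hq2) (sq_sqrt_two_mul_div_mul hk.le hq2)
    (sqrt_two_mul_div_mul_sqrt_two_mul_div hp.le hq2)

/-- Explicit translation-invariant solution of the time-translation-group resolving system
for `n = 1`, `q ≠ -2` (plus-sign branch). -/
theorem resolving_solution_trans_plus
    (p q k ε : ℝ)
    (hp : 0 < p) (hk : 0 < k) (hq2 : 0 < q + 2) (hq : q ≠ 0) (hq1 : q ≠ -1)
    (hε : ε = 1 ∨ ε = -1)
    (G H : ℝ → ℝ → ℝ)
    (hGdef : ∀ x v : ℝ, G x v =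
      ((q + 4) / (q + 2)) * (p * v + Real.sqrt (p * k) * v ^ (1 + q / 2)))
    (hHdef : ∀ x v : ℝ, H x v =
      ε * (Real.sqrt (2 * p / (q + 2)) * v + Real.sqrt (2 * k / (q + 2)) * v ^ (1 + q / 2))) :
    ∀ x v : ℝ, 0 < x → 0 < v →
      deriv (fun s => G s v) x + H x v * deriv (fun w => G x w) v
        - G x v * deriv (fun w => H x w) v = 0 ∧
      G x v - deriv (fun s => H s v) x - H x v * deriv (fun w => H x w) v
        = (p - k * v ^ q) * v :=
  resolving_solution_trans_plus_general p q k ε hp hk hq2 hε G H hGdef hHdef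
end

section
/- Let p, q, k be real constants with p > 0, k > 0, q + 2 > 0, q ≠ 0, q ≠ −1, let n = 1, and let ε ∈ {1, −1}. Define for x > 0, v > 0: G(x,v) := ((q+4)/(q+2)) (p v − (p k)^{1/2} v^{1+q/2}) and H(x,v) := ε ((2p/(q+2))^{1/2} v − (2k/(q+2))^{1/2} v^{1+q/2}). Then (G,H) satisfies the time-translation-group resolving system G_x + H G_v − G H_v = 0 and G − H_x − H H_v = (p − k v^q) v for all x > 0, v > 0. -/
/-!
Both `G` and `H` are constant multiples of the single profile `φ v = √p v - √k v^(1+q/2)`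
(independent of `x`): `G = ((q+4)/(q+2)) √p φ` and `H = ε √(2/(q+2)) φ`. Hence the first equation
is the vanishing Wronskian of two proportional functions, and the second reduces, using `ε² = 1`,
to the identity `((q+4)/(q+2)) √p φ - (2/(q+2)) φ φ' = (p - k v^q) v`, where `φ φ'` is a
three-term combination of powers of `v`.
-/

open Real

noncomputable def linSubRpow (a b m v : ℝ) : ℝ := a * v - b * v ^ m

theorem hasDerivAt_linSubRpow (a b m : ℝ) {v : ℝ} (hv : 0 < v) :
    HasDerivAt (linSubRpow a b m) (a - b * (m * v ^ (m - 1))) v :=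
  ((hasDerivAt_id' v).const_mul a |>.sub ((hasDerivAt_rpow_const (Or.inl hv.ne')).const_mul b))
    |>.congr_deriv (by ring)

theorem linSubRpow_mul_deriv (a b m : ℝ) {v : ℝ} (hv : 0 < v) :
    linSubRpow a b m v * deriv (linSubRpow a b m) v
      = a ^ 2 * v - a * b * (m + 1) * v ^ m + b ^ 2 * m * v ^ (2 * m - 1) := by
  have hsplit : v ^ m * v ^ (m - 1) = v ^ (2 * m - 1) := by
    rw [← rpow_add hv]
    ring_nf
  have hlin : v * v ^ (m - 1) = v ^ m := by
    rw [mul_comm, ← rpow_add_one hv.ne', sub_add_cancel]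
  rw [(hasDerivAt_linSubRpow a b m hv).deriv, linSubRpow, ← hsplit, ← hlin]
  ring

theorem sqrt_mul_sub_sqrt_mul_mul_rpow (c : ℝ) {p k : ℝ} (hp : 0 ≤ p) (hk : 0 ≤ k) (m v : ℝ) :
    √(c * p) * v - √(c * k) * v ^ m = √c * linSubRpow (√p) (√k) m v := by
  rw [sqrt_mul' c hp, sqrt_mul' c hk, linSubRpow]
  ring

theorem sub_sqrt_mul_mul_rpow {p : ℝ} (hp : 0 ≤ p) {k : ℝ} (hk : 0 ≤ k) (m v : ℝ) :
    p * v - √(p * k) * v ^ m = √p * linSubRpow (√p) (√k) m v := by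
  simpa only [sqrt_mul_self hp] using sqrt_mul_sub_sqrt_mul_mul_rpow p hp hk m v

theorem linSubRpow_sub_mul_deriv_eq {p k q v : ℝ} (hp : 0 ≤ p) (hk : 0 ≤ k) (hq2 : q + 2 ≠ 0)
    (hv : 0 < v) :
    (q + 4) / (q + 2) * √p * linSubRpow (√p) (√k) (1 + q / 2) v
        - 2 / (q + 2) * (linSubRpow (√p) (√k) (1 + q / 2) v
          * deriv (linSubRpow (√p) (√k) (1 + q / 2)) v)
      = (p - k * v ^ q) * v := by
  rw [linSubRpow_mul_deriv _ _ _ hv, sq_sqrt hp, sq_sqrt hk,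
    show 2 * (1 + q / 2) - 1 = q + 1 by ring, rpow_add_one hv.ne', linSubRpow]
  field_simp
  linear_combination (q + 4) * v * mul_self_sqrt hp

theorem resolving_solution_trans_minus_general
    (p q k ε : ℝ)
    (hp : 0 < p) (hk : 0 < k) (hq2 : 0 < q + 2)
    (hε : ε = 1 ∨ ε = -1)
    (G H : ℝ → ℝ → ℝ)
    (hGdef : ∀ x v : ℝ, G x v =
      ((q + 4) / (q + 2)) * (p * v - Real.sqrt (p * k) * v ^ (1 + q / 2)))
    (hHdef : ∀ x v : ℝ, H x v =
      ε * (Real.sqrt (2 * p / (q + 2)) * v - Real.sqrt (2 * k / (q + 2)) * v ^ (1 + q / 2))) :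
    ∀ x v : ℝ, 0 < x → 0 < v →
      deriv (fun s => G s v) x + H x v * deriv (fun w => G x w) v
        - G x v * deriv (fun w => H x w) v = 0 ∧
      G x v - deriv (fun s => H s v) x - H x v * deriv (fun w => H x w) v
        = (p - k * v ^ q) * v := by
  intro _ v _ hv
  set φ := linSubRpow (√p) (√k) (1 + q / 2)
  have hG : G = fun _ w => (q + 4) / (q + 2) * √p * φ w := funext₂ fun _ w => by
    rw [hGdef, sub_sqrt_mul_mul_rpow hp.le hk.le, mul_assoc]
  have hH : H = fun _ w => ε * √(2 / (q + 2)) * φ w := funext₂ fun _ w => by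
    rw [hHdef, mul_div_right_comm 2 p, mul_div_right_comm 2 k,
      sqrt_mul_sub_sqrt_mul_mul_rpow _ hp.le hk.le, mul_assoc]
  subst hG hH
  simp only [deriv_const, deriv_const_mul_field']
  refine ⟨by ring, ?_⟩
  have hε2 : ε ^ 2 = 1 := by rcases hε with rfl | rfl <;> norm_num
  have hu : √(2 / (q + 2)) ^ 2 = 2 / (q + 2) := sq_sqrt (by positivity)
  rw [← linSubRpow_sub_mul_deriv_eq hp.le hk.le hq2.ne' hv]
  linear_combination (-(φ v * deriv φ v * √(2 / (q + 2)) ^ 2)) * hε2 - (φ v * deriv φ v) * hu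

/-- Explicit translation-invariant solution of the time-translation-group resolving system
for `n = 1`, `q ≠ -2` (minus-sign branch). -/
theorem resolving_solution_trans_minus
    (p q k ε : ℝ)
    (hp : 0 < p) (hk : 0 < k) (hq2 : 0 < q + 2) (hq : q ≠ 0) (hq1 : q ≠ -1)
    (hε : ε = 1 ∨ ε = -1)
    (G H : ℝ → ℝ → ℝ)
    (hGdef : ∀ x v : ℝ, G x v =
      ((q + 4) / (q + 2)) * (p * v - Real.sqrt (p * k) * v ^ (1 + q / 2)))
    (hHdef : ∀ x v : ℝ, H x v =
      ε * (Real.sqrt (2 * p / (q + 2)) * v - Real.sqrt (2 * k / (q + 2)) * v ^ (1 + q / 2))) :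
    ∀ x v : ℝ, 0 < x → 0 < v →
      deriv (fun s => G s v) x + H x v * deriv (fun w => G x w) v
        - G x v * deriv (fun w => H x w) v = 0 ∧
      G x v - deriv (fun s => H s v) x - H x v * deriv (fun w => H x w) v
        = (p - k * v ^ q) * v :=
  resolving_solution_trans_minus_general p q k ε hp hk hq2 hε G H hGdef hHdef
end

section
/- Let p, k, c₁ be real constants with p > 0 and k > 0, let n = 1 and q = 2, and let ε ∈ {1, −1}. Define for x > 0, v > 0: G(x,v) := (3/2)(p v + ε (p k)^{1/2} tanh((p/2)^{1/2}(x + c₁)) v²) and H(x,v) := ε (k/2)^{1/2} v² + (p/2)^{1/2} tanh((p/2)^{1/2}(x + c₁)) v. Then (G,H) satisfies the time-translation-group resolving system G_x + H G_v − G H_v = 0 and G − H_x − H H_v = (p − k v²) v for all x > 0, v > 0. -/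
/-!
Both fields are taken quadratic in `v`: `G = a v + b(x) v²`, `H = β v² + α(x) v`. Substituting,
the resolving system collapses to `b' = a β - α b` together with `a - α' - α² = p`,
`b = 3 α β` and `2 β² = k`. With `β = ε √(k/2)`, `a = 3p/2` and `b = 3αβ`, what remains is
the Riccati equation `α' = p/2 - α²`, solved by `α(x) = √(p/2) tanh(√(p/2) (x + c₁))`.
-/

open Real

theorem Real.hasDerivAt_tanh (x : ℝ) : HasDerivAt tanh (1 - tanh x ^ 2) x := by
  have hcosh : cosh x ≠ 0 := (cosh_pos x).ne'
  rw [show tanh = sinh / cosh from funext tanh_eq_sinh_div_cosh]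
  refine ((hasDerivAt_sinh x).div (hasDerivAt_cosh x) hcosh).congr_deriv ?_
  rw [Pi.div_apply]
  field_simp

theorem hasDerivAt_mul_tanh_mul_add (A c x : ℝ) :
    HasDerivAt (fun s => A * tanh (A * (s + c))) (A ^ 2 - (A * tanh (A * (x + c))) ^ 2) x := by
  have hinner : HasDerivAt (fun s => A * (s + c)) A x := by
    simpa using ((hasDerivAt_id x).add_const c).const_mul A
  refine (((hasDerivAt_tanh _).comp x hinner).const_mul A).congr_deriv ?_
  ring

theorem sqrt_mul_eq_two_mul_sqrt_half_mul_sqrt_half {p : ℝ} (hp : 0 ≤ p) (k : ℝ) :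
    √(p * k) = 2 * (√(p / 2) * √(k / 2)) := by
  rw [← sqrt_mul (by positivity), show p / 2 * (k / 2) = p * k / 2 ^ 2 by ring,
    sqrt_div' _ (by positivity), sqrt_sq (by norm_num)]
  ring

theorem resolvingSystem_of_quadratic_ansatz {p k a β : ℝ} {α b : ℝ → ℝ} {x α' b' : ℝ}
    (hα : HasDerivAt α α' x) (hb : HasDerivAt b b' x) (G H : ℝ → ℝ → ℝ)
    (hG : ∀ x v, G x v = a * v + b x * v ^ 2) (hH : ∀ x v, H x v = β * v ^ 2 + α x * v)
    (hb' : b' = a * β - α x * b x) (hriccati : a - α' - α x ^ 2 = p)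
    (hb_eq : b x = 3 * α x * β) (hβ : 2 * β ^ 2 = k) (v : ℝ) :
    deriv (fun s => G s v) x + H x v * deriv (fun w => G x w) v
        - G x v * deriv (fun w => H x w) v = 0 ∧
      G x v - deriv (fun s => H s v) x - H x v * deriv (fun w => H x w) v
        = (p - k * v ^ 2) * v := by
  simp only [hG, hH]
  have hGx : HasDerivAt (fun s => a * v + b s * v ^ 2) (b' * v ^ 2) x :=
    (hb.mul_const _).const_add _
  have hHx : HasDerivAt (fun s => β * v ^ 2 + α s * v) (α' * v) x :=
    (hα.mul_const _).const_add _
  have hGv : HasDerivAt (fun w => a * w + b x * w ^ 2) (a + b x * (2 * v)) v := by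
    refine (((hasDerivAt_id' v).const_mul a).add
      ((hasDerivAt_pow 2 v).const_mul (b x))).congr_deriv ?_
    norm_num
  have hHv : HasDerivAt (fun w => β * w ^ 2 + α x * w) (β * (2 * v) + α x) v := by
    refine (((hasDerivAt_pow 2 v).const_mul β).add
      ((hasDerivAt_id' v).const_mul (α x))).congr_deriv ?_
    norm_num
  rw [hGx.deriv, hHx.deriv, hGv.deriv, hHv.deriv]
  constructor
  · linear_combination v ^ 2 * hb'
  · linear_combination v * hriccati + v ^ 2 * hb_eq - v ^ 3 * hβ

/-- Explicit tanh-solution of the time-translation-group resolving system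
for `n = 1`, `q = 2`, `p > 0`. -/
theorem resolving_solution_tanh
    (p k c₁ ε : ℝ) (hp : 0 < p) (hk : 0 < k) (hε : ε = 1 ∨ ε = -1)
    (G H : ℝ → ℝ → ℝ)
    (hGdef : ∀ x v : ℝ, G x v =
      (3 / 2) * (p * v + ε * Real.sqrt (p * k)
        * Real.tanh (Real.sqrt (p / 2) * (x + c₁)) * v ^ 2))
    (hHdef : ∀ x v : ℝ, H x v =
      ε * Real.sqrt (k / 2) * v ^ 2
        + Real.sqrt (p / 2) * Real.tanh (Real.sqrt (p / 2) * (x + c₁)) * v) :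
    ∀ x v : ℝ, 0 < x → 0 < v →
      deriv (fun s => G s v) x + H x v * deriv (fun w => G x w) v
        - G x v * deriv (fun w => H x w) v = 0 ∧
      G x v - deriv (fun s => H s v) x - H x v * deriv (fun w => H x w) v
        = (p - k * v ^ 2) * v := by
  intro x v _ _
  set A := √(p / 2)
  set β := ε * √(k / 2)
  set α : ℝ → ℝ := fun s => A * tanh (A * (s + c₁))
  have hA : A ^ 2 = p / 2 := sq_sqrt (by positivity)
  have hβ : 2 * β ^ 2 = k := by
    have hε2 : ε ^ 2 = 1 := by rcases hε with rfl | rfl <;> norm_num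
    rw [mul_pow, hε2, sq_sqrt (by positivity)]
    ring
  have hα : HasDerivAt α (A ^ 2 - α x ^ 2) x := hasDerivAt_mul_tanh_mul_add A c₁ x
  refine resolvingSystem_of_quadratic_ansatz (a := 3 * A ^ 2) hα (hα.const_mul (3 * β)) G H
    (fun s w => ?_) (fun s w => by rw [hHdef]) (by ring) (by linear_combination 2 * hA)
    (by ring) hβ v
  rw [hGdef, sqrt_mul_eq_two_mul_sqrt_half_mul_sqrt_half hp.le, hA]
  ring
end

section
/- Let p, k, c₁ be real constants with p < 0 and k > 0, let n = 1 and q = 2, and let ε ∈ {1, −1}. Define, for all x > 0 with cos((−p/2)^{1/2}(x + c₁)) ≠ 0 and all v > 0: G(x,v) := (3/2)(p v − ε (−p k)^{1/2} tan((−p/2)^{1/2}(x + c₁)) v²) and H(x,v) := ε (k/2)^{1/2} v² − (−p/2)^{1/2} tan((−p/2)^{1/2}(x + c₁)) v. Then (G,H) satisfies the time-translation-group resolving system G_x + H G_v − G H_v = 0 and G − H_x − H H_v = (p − k v²) v at all such points (x,v). -/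
/-!
With `τ(x) = tan(a (x + c₁))`, `a = √(-p/2)` and `σ = ε √(k/2)`, the data read
`G = (3/2)(p v - 2 a σ τ v²)` and `H = σ v² - a τ v`, since `√(-p k) = 2 √(-p/2) √(k/2)`.
Both equations of the system are polynomial in `v`, and after substituting `τ'` they reduce
to the Riccati equation `τ' = a (1 + τ²)` satisfied by the tangent, together with
`a² = -p/2` and `σ² = k/2`.
-/

open Real

theorem Real.hasDerivAt_tan_eq_one_add_tan_sq {x : ℝ} (h : cos x ≠ 0) :
    HasDerivAt tan (1 + tan x ^ 2) x :=
  (hasDerivAt_tan h).congr_deriv <| by rw [← inv_one_add_tan_sq h, one_div, inv_inv]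

theorem hasDerivAt_tan_mul_add {a c₁ x : ℝ} (h : cos (a * (x + c₁)) ≠ 0) :
    HasDerivAt (fun s => tan (a * (s + c₁))) (a * (1 + tan (a * (x + c₁)) ^ 2)) x := by
  have hlin : HasDerivAt (fun s => a * (s + c₁)) a x := by
    simpa using ((hasDerivAt_id x).add_const c₁).const_mul a
  exact ((hasDerivAt_tan_eq_one_add_tan_sq h).comp x hlin).congr_deriv (mul_comm _ _)

theorem resolving_system_of_riccati {p k a σ x : ℝ} {τ : ℝ → ℝ} (G H : ℝ → ℝ → ℝ)
    (ha : a ^ 2 = -p / 2) (hσ : σ ^ 2 = k / 2) (hτ : HasDerivAt τ (a * (1 + τ x ^ 2)) x)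
    (hG : ∀ x v, G x v = 3 / 2 * (p * v - 2 * a * σ * τ x * v ^ 2))
    (hH : ∀ x v, H x v = σ * v ^ 2 - a * τ x * v) (v : ℝ) :
    deriv (fun s => G s v) x + H x v * deriv (fun w => G x w) v
        - G x v * deriv (fun w => H x w) v = 0 ∧
      G x v - deriv (fun s => H s v) x - H x v * deriv (fun w => H x w) v
        = (p - k * v ^ 2) * v := by
  have hGx : deriv (fun s => G s v) x = -3 * a * σ * (a * (1 + τ x ^ 2)) * v ^ 2 := by
    simp only [hG]
    exact ((((hτ.const_mul (2 * a * σ)).mul_const (v ^ 2)).const_sub (p * v)).const_mul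
      (3 / 2)).deriv.trans (by ring)
  have hHx : deriv (fun s => H s v) x = -a * (a * (1 + τ x ^ 2)) * v := by
    simp only [hH]
    exact (((hτ.const_mul a).mul_const v).const_sub (σ * v ^ 2)).deriv.trans (by ring)
  have hGv : deriv (fun w => G x w) v = 3 / 2 * (p - 4 * a * σ * τ x * v) := by
    simp only [hG]
    exact ((((hasDerivAt_id v).const_mul p).sub
      ((hasDerivAt_pow 2 v).const_mul (2 * a * σ * τ x))).const_mul (3 / 2)).deriv.trans
      (by ring)
  have hHv : deriv (fun w => H x w) v = 2 * σ * v - a * τ x := by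
    simp only [hH]
    exact (((hasDerivAt_pow 2 v).const_mul σ).sub
      ((hasDerivAt_id v).const_mul (a * τ x))).deriv.trans (by ring)
  rw [hGx, hHx, hGv, hHv, hG, hH]
  constructor
  · linear_combination (-3 * σ * v ^ 2) * ha
  · linear_combination (-2 * v ^ 3) * hσ + v * ha

/-- Explicit tan-solution of the time-translation-group resolving system
for `n = 1`, `q = 2`, `p < 0`. -/
theorem resolving_solution_tan
    (p k c₁ ε : ℝ) (hp : p < 0) (hk : 0 < k) (hε : ε = 1 ∨ ε = -1)
    (G H : ℝ → ℝ → ℝ)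
    (hGdef : ∀ x v : ℝ, G x v =
      (3 / 2) * (p * v - ε * Real.sqrt (-(p * k))
        * Real.tan (Real.sqrt (-p / 2) * (x + c₁)) * v ^ 2))
    (hHdef : ∀ x v : ℝ, H x v =
      ε * Real.sqrt (k / 2) * v ^ 2
        - Real.sqrt (-p / 2) * Real.tan (Real.sqrt (-p / 2) * (x + c₁)) * v) :
    ∀ x v : ℝ, 0 < x → 0 < v →
      Real.cos (Real.sqrt (-p / 2) * (x + c₁)) ≠ 0 →
      deriv (fun s => G s v) x + H x v * deriv (fun w => G x w) v
        - G x v * deriv (fun w => H x w) v = 0 ∧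
      G x v - deriv (fun s => H s v) x - H x v * deriv (fun w => H x w) v
        = (p - k * v ^ 2) * v := by
  intro x v _ _ hcos
  set a := √(-p / 2)
  have hsqrt : √(-(p * k)) = 2 * a * √(k / 2) := by
    rw [mul_assoc, ← sqrt_mul (by linarith), show -(p * k) = 2 ^ 2 * (-p / 2 * (k / 2)) by ring,
      sqrt_mul (by positivity), sqrt_sq zero_le_two]
  have hσ : (ε * √(k / 2)) ^ 2 = k / 2 := by
    rw [mul_pow, sq_sqrt (by positivity)]
    rcases hε with rfl | rfl <;> ring
  refine resolving_system_of_riccati G H (sq_sqrt (by linarith)) hσ (hasDerivAt_tan_mul_add hcos)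
    (fun x v => ?_) hHdef v
  rw [hGdef, hsqrt]
  ring
end

section
/- Let p, k be real constants with p > 0 and k ∈ {1, −1}, let n = 1 and q = −3/2. Define for x > 0, v > 0: G(x,v) := 3 (p v + (k² p)^{1/3} + (k p²)^{1/3} v^{1/2}) and H(x,v) := −(2/p)^{1/2} (p v + (k² p)^{1/3} + (k p²)^{1/3} v^{1/2}), where cube roots are real cube roots. Then (G,H) satisfies the time-translation-group resolving system G_x + H G_v − G H_v = 0 and G − H_x − H H_v = (p − k v^{−3/2}) v for all x > 0, v > 0. -/
/-! Write `u = p^{1/3}`, so that the two cube roots are `u` and `k u²`, and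
`F v = u³ v + u + k u² √v`. Both `G = 3F` and `H = -√(2/p) F` are multiples of the same
profile `F` and do not depend on `x`, which makes the first equation trivial and reduces the
second to `(3 - (2/p) F') F = p v - k / √v`; using `p = u³` and `k² = 1` this is a polynomial
identity in `u`, `√v` and `1/√v`. -/

noncomputable def realCbrt (y : ℝ) : ℝ := Real.sign y * |y| ^ ((1 : ℝ) / 3)

lemma realCbrt_neg (y : ℝ) : realCbrt (-y) = -realCbrt y := by
  simp only [realCbrt, Real.sign_neg, abs_neg, neg_mul]

lemma realCbrt_of_nonneg {y : ℝ} (hy : 0 ≤ y) : realCbrt y = y ^ ((1 : ℝ) / 3) := by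
  rcases hy.eq_or_lt with rfl | hy
  · simp [realCbrt]
  · rw [realCbrt, Real.sign_of_pos hy, abs_of_pos hy, one_mul]

lemma realCbrt_sign_mul {k y : ℝ} (hk : k = 1 ∨ k = -1) (hy : 0 ≤ y) :
    realCbrt (k * y) = k * y ^ ((1 : ℝ) / 3) := by
  rcases hk with rfl | rfl
  · rw [one_mul, one_mul, realCbrt_of_nonneg hy]
  · rw [neg_one_mul, neg_one_mul, realCbrt_neg, realCbrt_of_nonneg hy]

lemma rpow_one_third_pow_three {p : ℝ} (hp : 0 ≤ p) : (p ^ ((1 : ℝ) / 3)) ^ 3 = p := by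
  simpa [one_div] using Real.rpow_inv_natCast_pow hp (n := 3) (by norm_num)

lemma rpow_neg_three_halves_mul_self {v : ℝ} (hv : 0 < v) : v ^ (-(3 : ℝ) / 2) * v = (√v)⁻¹ := by
  rw [← Real.rpow_add_one hv.ne', Real.sqrt_eq_rpow, ← Real.rpow_neg hv.le]
  norm_num

lemma resolving_system_of_profile {G H : ℝ → ℝ → ℝ} {F : ℝ → ℝ} {a b F' v : ℝ}
    (hG : ∀ x w, G x w = a * F w) (hH : ∀ x w, H x w = b * F w) (hF : HasDerivAt F F' v)
    (x : ℝ) :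
    deriv (fun s => G s v) x + H x v * deriv (fun w => G x w) v
        - G x v * deriv (fun w => H x w) v = 0 ∧
      G x v - deriv (fun s => H s v) x - H x v * deriv (fun w => H x w) v
        = (a - b ^ 2 * F') * F v := by
  have hGx : deriv (fun s => G s v) x = 0 := by simp only [hG, deriv_const]
  have hHx : deriv (fun s => H s v) x = 0 := by simp only [hH, deriv_const]
  have hGv : deriv (fun w => G x w) v = a * F' := by
    simp only [hG]; exact (hF.const_mul a).deriv
  have hHv : deriv (fun w => H x w) v = b * F' := by
    simp only [hH]; exact (hF.const_mul b).deriv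
  rw [hGx, hHx, hGv, hHv, hG, hH]
  constructor <;> ring

lemma hasDerivAt_profile (u k : ℝ) {v : ℝ} (hv : 0 < v) :
    HasDerivAt (fun w => u ^ 3 * w + u + k * u ^ 2 * √w)
      (u ^ 3 + k * u ^ 2 * (1 / (2 * √v))) v := by
  have hlin : HasDerivAt (fun w => u ^ 3 * w + u) (u ^ 3) v := by
    simpa using ((hasDerivAt_id v).const_mul (u ^ 3)).add_const u
  exact hlin.add ((Real.hasDerivAt_sqrt hv.ne').const_mul (k * u ^ 2))

lemma profile_identity {u k s : ℝ} (hu : u ≠ 0) (hs : s ≠ 0) (hk : k ^ 2 = 1) :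
    (3 - 2 / u ^ 3 * (u ^ 3 + k * u ^ 2 * (1 / (2 * s)))) * (u ^ 3 * s ^ 2 + u + k * u ^ 2 * s)
      = u ^ 3 * s ^ 2 - k * s⁻¹ := by
  field_simp
  linear_combination (-(u * s)) * hk

/-- Explicit multi-term translation-invariant solution of the time-translation-group
resolving system for `n = 1`, `q = -3/2`, `p > 0`. -/
theorem resolving_solution_q_neg_three_halves
    (p k : ℝ) (hp : 0 < p) (hk : k = 1 ∨ k = -1)
    (G H : ℝ → ℝ → ℝ)
    (hGdef : ∀ x v : ℝ, G x v =
      3 * (p * v + realCbrt (k ^ 2 * p) + realCbrt (k * p ^ 2) * v ^ ((1 : ℝ) / 2)))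
    (hHdef : ∀ x v : ℝ, H x v =
      -Real.sqrt (2 / p)
        * (p * v + realCbrt (k ^ 2 * p) + realCbrt (k * p ^ 2) * v ^ ((1 : ℝ) / 2))) :
    ∀ x v : ℝ, 0 < x → 0 < v →
      deriv (fun s => G s v) x + H x v * deriv (fun w => G x w) v
        - G x v * deriv (fun w => H x w) v = 0 ∧
      G x v - deriv (fun s => H s v) x - H x v * deriv (fun w => H x w) v
        = (p - k * v ^ (-(3 : ℝ) / 2)) * v := by
  intro x v _ hv
  have hk2 : k ^ 2 = 1 := by rcases hk with rfl | rfl <;> norm_num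
  set u := p ^ ((1 : ℝ) / 3) with hu_def
  have hu : 0 < u := by positivity
  have hp3 : p = u ^ 3 := (rpow_one_third_pow_three hp.le).symm
  have hA : realCbrt (k ^ 2 * p) = u := by rw [hk2, one_mul, realCbrt_of_nonneg hp.le]
  have hB : realCbrt (k * p ^ 2) = k * u ^ 2 := by
    rw [realCbrt_sign_mul hk (by positivity), hu_def, Real.rpow_pow_comm hp.le]
  have hG : ∀ x w, G x w = 3 * (u ^ 3 * w + u + k * u ^ 2 * √w) := fun x w => by
    rw [hGdef, hA, hB, ← hp3, Real.sqrt_eq_rpow w]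
  have hH : ∀ x w, H x w = -√(2 / p) * (u ^ 3 * w + u + k * u ^ 2 * √w) := fun x w => by
    rw [hHdef, hA, hB, ← hp3, Real.sqrt_eq_rpow w]
  refine (resolving_system_of_profile hG hH (hasDerivAt_profile u k hv) x).imp_right
    fun h => h.trans ?_
  have hrhs : (p - k * v ^ (-(3 : ℝ) / 2)) * v = u ^ 3 * v - k * (√v)⁻¹ := by
    rw [sub_mul, mul_assoc, rpow_neg_three_halves_mul_self hv, hp3]
  have hidentity := profile_identity hu.ne' (Real.sqrt_pos.2 hv).ne' hk2
  rw [Real.sq_sqrt hv.le] at hidentity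
  rw [hrhs, neg_sq, Real.sq_sqrt (by positivity), hp3]
  exact hidentity
end

section
/- Let p be a real constant with p > 0, let k = −1, n = 1 and q = −8/3. Define for x > 0, v > 0: G(x,v) := 4 (p v + p^{1/2} v^{−1/3} + (4 p³)^{1/4} v^{1/3}) and H(x,v) := −(3/p)^{1/2} (p v + p^{1/2} v^{−1/3} + (4 p³)^{1/4} v^{1/3}). Then (G,H) satisfies the time-translation-group resolving system G_x + H G_v − G H_v = 0 and G − H_x − H H_v = (p + v^{−8/3}) v for all x > 0, v > 0. -/
/-!
`G` and `H` are both constant multiples, `4 F` and `-√(3/p) F`, of one profile `F(v)` that does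
not depend on `x`. Proportionality makes `H G_v - G H_v` vanish, so the first equation holds, and
the second reduces to `4 F - (3/p) F F' = p v + v^(-5/3)`. In the variable `t = v^(1/3)` this is an
identity of Laurent polynomials: the `t⁻¹` terms cancel because `((4p³)^(1/4))² = 2 p √p`, and the
`t⁻⁵` coefficient is `(√p)² / p = 1`.
-/

open Real

theorem resolving_system_lhs_of_proportional (f : ℝ → ℝ) (α β : ℝ) {G H : ℝ → ℝ → ℝ}
    (hG : ∀ x v, G x v = α * f v) (hH : ∀ x v, H x v = β * f v) (x v : ℝ) :
    deriv (fun s => G s v) x + H x v * deriv (fun w => G x w) v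
        - G x v * deriv (fun w => H x w) v = 0 ∧
      G x v - deriv (fun s => H s v) x - H x v * deriv (fun w => H x w) v
        = α * f v - β ^ 2 * f v * deriv f v := by
  simp only [hG, hH, deriv_const, deriv_const_mul_field']
  constructor <;> ring

theorem rpow_intCast_div_three {v : ℝ} (hv : 0 ≤ v) (m : ℤ) :
    v ^ ((m : ℝ) / 3) = (v ^ ((1 : ℝ) / 3)) ^ m := by
  rw [← Real.rpow_intCast, ← Real.rpow_mul hv]
  congr 1
  ring

theorem sq_rpow_one_fourth_four_mul_pow_three {p : ℝ} (hp : 0 ≤ p) :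
    ((4 * p ^ 3) ^ ((1 : ℝ) / 4)) ^ 2 = 2 * p * √p := by
  have hsq : (4 : ℝ) * p ^ 3 = (2 * p * √p) ^ 2 := by
    rw [mul_pow, sq_sqrt hp]
    ring
  rw [← Real.rpow_natCast, ← Real.rpow_mul (by positivity), hsq]
  norm_num
  rw [← Real.sqrt_eq_rpow, Real.sqrt_sq (by positivity)]

noncomputable def resolvingProfile (p v : ℝ) : ℝ :=
  p * v + √p * v ^ (-(1 : ℝ) / 3) + (4 * p ^ 3) ^ ((1 : ℝ) / 4) * v ^ ((1 : ℝ) / 3)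

theorem hasDerivAt_resolvingProfile (p : ℝ) {v : ℝ} (hv : 0 < v) :
    HasDerivAt (resolvingProfile p)
      (p + √p * (-(1 : ℝ) / 3 * v ^ (-(1 : ℝ) / 3 - 1))
        + (4 * p ^ 3) ^ ((1 : ℝ) / 4) * ((1 : ℝ) / 3 * v ^ ((1 : ℝ) / 3 - 1))) v := by
  have hlin := (hasDerivAt_id' v).const_mul p
  have hneg := (Real.hasDerivAt_rpow_const (p := -(1 : ℝ) / 3) (Or.inl hv.ne')).const_mul √p
  have hpos := (Real.hasDerivAt_rpow_const (p := (1 : ℝ) / 3) (Or.inl hv.ne')).const_mul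
    ((4 * p ^ 3) ^ ((1 : ℝ) / 4))
  exact ((hlin.add hneg).add hpos).congr_deriv (by ring)

theorem resolvingProfile_laurent_identity {p a b t : ℝ} (hp : p ≠ 0) (ht : t ≠ 0) (hb : b ^ 2 = p)
    (ha : a ^ 2 = 2 * p * b) :
    4 * (p * t ^ 3 + b * t⁻¹ + a * t) - 3 / p * (p * t ^ 3 + b * t⁻¹ + a * t)
        * (p + b * (-(1 : ℝ) / 3 * (t ^ 4)⁻¹) + a * ((1 : ℝ) / 3 * (t ^ 2)⁻¹))
      = (p + (t ^ 8)⁻¹) * t ^ 3 := by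
  field_simp
  linear_combination hb - t ^ 4 * ha

theorem resolvingProfile_identity {p v : ℝ} (hp : 0 < p) (hv : 0 < v) :
    4 * resolvingProfile p v - 3 / p * resolvingProfile p v * deriv (resolvingProfile p) v
      = (p + v ^ (-(8 : ℝ) / 3)) * v := by
  set t := v ^ ((1 : ℝ) / 3)
  have ht : t ≠ 0 := (Real.rpow_pos_of_pos hv _).ne'
  have hpow : ∀ (m : ℤ) (r : ℝ), r = m / 3 → v ^ r = t ^ m := by
    rintro m r rfl
    exact rpow_intCast_div_three hv.le m
  have hv3 : v = t ^ 3 := by simpa using hpow 3 1 (by norm_num)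
  rw [(hasDerivAt_resolvingProfile p hv).deriv, resolvingProfile,
    hpow (-1) (-(1 : ℝ) / 3) (by norm_num), hpow (-4) (-(1 : ℝ) / 3 - 1) (by norm_num),
    hpow (-2) ((1 : ℝ) / 3 - 1) (by norm_num), hpow 1 ((1 : ℝ) / 3) (by norm_num), hpow (-8) (-(8 : ℝ) / 3) (by norm_num), hv3]
  simp only [zpow_neg, zpow_one]
  exact resolvingProfile_laurent_identity hp.ne' ht (sq_sqrt hp.le) (sq_rpow_one_fourth_four_mul_pow_three hp.le)

/-- Explicit multi-term translation-invariant solution of the time-translation-group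
resolving system for `n = 1`, `q = -8/3`, `k = -1`, `p > 0`. -/
theorem resolving_solution_q_neg_eight_thirds
    (p : ℝ) (hp : 0 < p)
    (G H : ℝ → ℝ → ℝ)
    (hGdef : ∀ x v : ℝ, G x v =
      4 * (p * v + Real.sqrt p * v ^ (-(1 : ℝ) / 3)
        + (4 * p ^ 3) ^ ((1 : ℝ) / 4) * v ^ ((1 : ℝ) / 3)))
    (hHdef : ∀ x v : ℝ, H x v =
      -Real.sqrt (3 / p) * (p * v + Real.sqrt p * v ^ (-(1 : ℝ) / 3)
        + (4 * p ^ 3) ^ ((1 : ℝ) / 4) * v ^ ((1 : ℝ) / 3))) :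
    ∀ x v : ℝ, 0 < x → 0 < v →
      deriv (fun s => G s v) x + H x v * deriv (fun w => G x w) v
        - G x v * deriv (fun w => H x w) v = 0 ∧
      G x v - deriv (fun s => H s v) x - H x v * deriv (fun w => H x w) v
        = (p + v ^ (-(8 : ℝ) / 3)) * v := by
  intro x v _ hv
  obtain ⟨hfirst, hsecond⟩ :=
    resolving_system_lhs_of_proportional (resolvingProfile p) 4 (-√(3 / p)) hGdef hHdef x v
  refine ⟨hfirst, hsecond.trans ?_⟩
  rw [neg_sq, sq_sqrt (by positivity)]
  exact resolvingProfile_identity hp hv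
end

section
/- Let n, k, c be real constants with n ∉ {2, 3} and k/((n−3)(n−2)) > 0, let p = 0 and q = 2/(2−n), and let ε ∈ {1, −1}. Define A := ε (k/((n−3)(n−2)))^{1/2} and u(t,r) := (A (r/2 − (n−4)(t+c)/r))^{n−2}, where the real power with exponent n−2 is taken. Then at every point (t,r) with r > 0 and A (r/2 − (n−4)(t+c)/r) > 0, the function u is positive and satisfies the reaction-diffusion equation u_t = u_rr + (n−1) r^{−1} u_r − k u^{q+1}. -/
/-!
Write `u = w ^ (n - 2)` with `w = A (r/2 - (n-4)(t+c)/r)`. Since `(n - 2)(q + 1) = n - 4`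
and `k = (n - 3)(n - 2) A²`, dividing the equation by `(n - 2) w ^ (n - 4)` leaves
`w w_t = w w_rr + (n - 3) w_r² + (n - 1) r⁻¹ w w_r - (n - 3) A²`,
which is a polynomial identity in `B / r²`, `B = (n - 4)(t + c)`, whose `(B / r²)²`
coefficients cancel.
-/

open Filter Topology

theorem deriv_deriv_rpow_const {w w' : ℝ → ℝ} {w'' x : ℝ} (m : ℝ)
    (hw : ∀ᶠ y in 𝓝 x, HasDerivAt w (w' y) y) (hw' : HasDerivAt w' w'' x) (hpos : 0 < w x) :
    deriv (deriv fun y => w y ^ m) x =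
      w'' * m * w x ^ (m - 1) + w' x * m * ((m - 1) * w x ^ (m - 2) * w' x) := by
  have hwx : HasDerivAt w (w' x) x := hw.self_of_nhds
  have hderiv : deriv (fun y => w y ^ m) =ᶠ[𝓝 x] fun y => w' y * m * w y ^ (m - 1) := by
    filter_upwards [hw, hwx.continuousAt.eventually (eventually_gt_nhds hpos)] with y hy hy0
    exact (hy.rpow_const (Or.inl hy0.ne')).deriv
  have hpow : HasDerivAt (fun y => w y ^ (m - 1)) ((m - 1) * w x ^ (m - 2) * w' x) x := by
    convert hwx.rpow_const (p := m - 1) (Or.inl hpos.ne') using 1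
    ring_nf
  rw [hderiv.deriv_eq, ((hw'.mul_const m).fun_mul hpow).deriv]

noncomputable def similarityProfile (A n c t r : ℝ) : ℝ :=
  A * (r / 2 - (n - 4) * (t + c) / r)

section HalfSubDiv

variable (A B : ℝ) {r : ℝ}

theorem hasDerivAt_const_mul_half_sub_div (hr : r ≠ 0) :
    HasDerivAt (fun s => A * (s / 2 - B / s)) (A * (1 / 2 + B / r ^ 2)) r := by
  refine ((((hasDerivAt_id' r).div_const 2).sub
    ((hasDerivAt_const r B).fun_div (hasDerivAt_id' r) hr)).const_mul A).congr_deriv ?_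
  field_simp
  ring

theorem hasDerivAt_const_mul_half_add_div_sq (hr : r ≠ 0) :
    HasDerivAt (fun s => A * (1 / 2 + B / s ^ 2)) (-(2 * A * B / r ^ 3)) r := by
  refine ((((hasDerivAt_const r B).fun_div (hasDerivAt_pow 2 r) (pow_ne_zero 2 hr)).const_add
    (1 / 2)).const_mul A).congr_deriv ?_
  field_simp
  ring

end HalfSubDiv

theorem similarityProfile_reduced_eq (A n c t : ℝ) {r : ℝ} (hr : r ≠ 0) :
    let w := similarityProfile A n c t r
    let B := (n - 4) * (t + c)
    w * -(A * (n - 4) / r) =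
      w * -(2 * A * B / r ^ 3) + (n - 3) * (A * (1 / 2 + B / r ^ 2)) ^ 2
        + (n - 1) * r⁻¹ * w * (A * (1 / 2 + B / r ^ 2)) - (n - 3) * A ^ 2 := by
  simp only [similarityProfile]
  field_simp
  ring

theorem similarityProfile_rpow_radial_eq (A n c : ℝ) {t r : ℝ} (hr : 0 < r)
    (hw : 0 < similarityProfile A n c t r) :
    deriv (fun s => similarityProfile A n c s r ^ (n - 2)) t =
      deriv (deriv fun s => similarityProfile A n c t s ^ (n - 2)) r
        + (n - 1) * r⁻¹ * deriv (fun s => similarityProfile A n c t s ^ (n - 2)) r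
        - (n - 3) * (n - 2) * A ^ 2 * similarityProfile A n c t r ^ (n - 4) := by
  set w := similarityProfile A n c t r
  set B := (n - 4) * (t + c)
  have ht : HasDerivAt (fun s => similarityProfile A n c s r) (-(A * (n - 4) / r)) t := by
    refine (((((hasDerivAt_id' t).add_const c).const_mul (n - 4)).div_const r).const_sub
      (r / 2)).const_mul A |>.congr_deriv ?_
    ring
  have hx : ∀ᶠ s in 𝓝 r,
      HasDerivAt (similarityProfile A n c t) (A * (1 / 2 + B / s ^ 2)) s := by
    filter_upwards [eventually_ne_nhds hr.ne'] with s hs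
    exact hasDerivAt_const_mul_half_sub_div A B hs
  rw [(ht.rpow_const (Or.inl hw.ne')).deriv,
    deriv_deriv_rpow_const _ hx (hasDerivAt_const_mul_half_add_div_sq A B hr.ne') hw,
    (hx.self_of_nhds.rpow_const (Or.inl hw.ne')).deriv]
  have hw1 : w ^ (n - 2 - 1) = w ^ (n - 4) * w := by
    rw [← Real.rpow_add_one hw.ne', show n - 4 + 1 = n - 2 - 1 by ring]
  have hw2 : w ^ (n - 2 - 2) = w ^ (n - 4) := by rw [show n - 2 - 2 = n - 4 by ring]
  rw [hw1, hw2]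
  linear_combination (n - 2) * w ^ (n - 4) * similarityProfile_reduced_eq A n c t hr.ne'

theorem similarity_solution_general
    (n k c q ε : ℝ)
    (hk : 0 < k / ((n - 3) * (n - 2)))
    (hq : q = 2 / (2 - n)) (hε : ε = 1 ∨ ε = -1)
    (A : ℝ) (hA : A = ε * Real.sqrt (k / ((n - 3) * (n - 2))))
    (u : ℝ → ℝ → ℝ)
    (hu : ∀ t r : ℝ, u t r = (A * (r / 2 - (n - 4) * (t + c) / r)) ^ (n - 2)) :
    ∀ t r : ℝ, 0 < r → 0 < A * (r / 2 - (n - 4) * (t + c) / r) →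
      0 < u t r ∧
      deriv (fun s => u s r) t =
        deriv (deriv (fun s => u t s)) r
          + (n - 1) * r⁻¹ * deriv (fun s => u t s) r
          - k * u t r ^ (q + 1) := by
  intro t r hr hw
  change 0 < similarityProfile A n c t r at hw
  obtain rfl : u = fun t r => similarityProfile A n c t r ^ (n - 2) := funext₂ hu
  have hden : (n - 3) * (n - 2) ≠ 0 := fun h => by simp [h] at hk
  have hk_eq : k = (n - 3) * (n - 2) * A ^ 2 := by
    have hε2 : ε ^ 2 = 1 := by rcases hε with rfl | rfl <;> norm_num
    rw [hA, mul_pow, hε2, Real.sq_sqrt hk.le, one_mul, mul_div_cancel₀ k hden]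
  have hexp : (n - 2) * (q + 1) = n - 4 := by
    have : 2 - n ≠ 0 := fun h => hden (by linear_combination (3 - n) * h)
    rw [hq]; field_simp; ring
  refine ⟨Real.rpow_pos_of_pos hw _, ?_⟩
  beta_reduce
  rw [← Real.rpow_mul hw.le, hexp, hk_eq]
  exact similarityProfile_rpow_radial_eq A n c hr hw

/-- Explicit similarity solution of the reaction-diffusion equation with `p = 0`,
`q = 2/(2-n)`, `n ∉ {2,3}`. -/
theorem similarity_solution
    (n k c p q ε : ℝ)
    (hn2 : n ≠ 2) (hn3 : n ≠ 3) (hk : 0 < k / ((n - 3) * (n - 2)))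
    (hp : p = 0) (hq : q = 2 / (2 - n)) (hε : ε = 1 ∨ ε = -1)
    (A : ℝ) (hA : A = ε * Real.sqrt (k / ((n - 3) * (n - 2))))
    (u : ℝ → ℝ → ℝ)
    (hu : ∀ t r : ℝ, u t r = (A * (r / 2 - (n - 4) * (t + c) / r)) ^ (n - 2)) :
    ∀ t r : ℝ, 0 < r → 0 < A * (r / 2 - (n - 4) * (t + c) / r) →
      0 < u t r ∧
      deriv (fun s => u s r) t =
        deriv (deriv (fun s => u t s)) r
          + (n - 1) * r⁻¹ * deriv (fun s => u t s) r
          - k * u t r ^ (q + 1) :=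
  similarity_solution_general n k c q ε hk hq hε A hA u hu
end

section
/- Let p, q, k, c be real constants with p > 0, k > 0, q + 2 > 0, q ≠ 0, q ≠ −1, let n = 1, and let ε ∈ {1, −1}. Set β := (p/(2(q+2)))^{1/2} and define u(t,r) := (−(k/p)^{1/2} + exp(−ε q β (r + ε (q+4) β (t+c))))^{−2/q}, where the real power with exponent −2/q is taken. Then at every point (t,r) where −(k/p)^{1/2} + exp(−ε q β (r + ε (q+4) β (t+c))) > 0, the function u is positive and satisfies u_t = u_rr + (p − k u^q) u. -/
/-!
In the travelling coordinate `ξ = r + b (t + c)` the equation becomes the ODE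
`b φ' = φ'' + (p - k φ^q) φ`. For `φ = w^m` with `w = -A + e^{aξ}` and `m q = -2`, multiplying
the ODE by `w^(2-m)` leaves a quadratic polynomial identity in `e^{aξ}`; its coefficients vanish
exactly when `p A² = k` and `b m a` equals both `m² a² + p` and `m a² + 2 p`. With `A = √(k/p)`,
`a = -ε q β`, `m = -2/q` and `b = ε (q + 4) β`, the last two reduce, using `ε² = 1`, to
`2 (q + 2) β² = p`.
-/

open Real Filter Topology

namespace TravellingWave

theorem deriv_travellingWave_eq_of_profile_ode {φ f : ℝ → ℝ} {b c t r : ℝ}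
    (hφ : DifferentiableAt ℝ φ (r + b * (t + c)))
    (hode : b * deriv φ (r + b * (t + c)) =
      deriv (deriv φ) (r + b * (t + c)) + f (φ (r + b * (t + c)))) :
    deriv (fun s => φ (r + b * (s + c))) t =
      deriv (deriv fun s => φ (s + b * (t + c))) r + f (φ (r + b * (t + c))) := by
  have hξ : HasDerivAt (fun s => r + b * (s + c)) b t := by
    simpa using (((hasDerivAt_id t).add_const c).const_mul b).const_add r
  have htime : HasDerivAt (fun s => φ (r + b * (s + c))) (deriv φ (r + b * (t + c)) * b) t :=
    hφ.hasDerivAt.comp t hξ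
  have hshift : deriv (fun s => φ (s + b * (t + c))) = fun s => deriv φ (s + b * (t + c)) :=
    funext fun s => deriv_comp_add_const φ _ s
  rw [htime.deriv, hshift, deriv_comp_add_const, ← hode, mul_comm]

noncomputable def profile (A a m ξ : ℝ) : ℝ := (-A + exp (a * ξ)) ^ m

variable {A a m ξ : ℝ}

theorem hasDerivAt_profile (h : 0 < -A + exp (a * ξ)) :
    HasDerivAt (profile A a m) (m * a * exp (a * ξ) * (-A + exp (a * ξ)) ^ (m - 1)) ξ := by
  have hbase : HasDerivAt (fun x => -A + exp (a * x)) (a * exp (a * ξ)) ξ := by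
    simpa [mul_comm] using (((hasDerivAt_id ξ).const_mul a).exp).const_add (-A)
  refine ((hasDerivAt_rpow_const (p := m) (Or.inl h.ne')).comp ξ hbase).congr_deriv ?_
  ring

theorem deriv_deriv_profile (h : 0 < -A + exp (a * ξ)) :
    deriv (deriv (profile A a m)) ξ =
      m * a ^ 2 * exp (a * ξ) * (-A + exp (a * ξ)) ^ (m - 1)
        + m * (m - 1) * a ^ 2 * exp (a * ξ) ^ 2 * (-A + exp (a * ξ)) ^ (m - 2) := by
  have hpos : ∀ᶠ x in 𝓝 ξ, 0 < -A + exp (a * x) :=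
    (continuous_const.add (continuous_const.mul continuous_id).rexp).continuousAt.eventually
      (eventually_gt_nhds h)
  have hderiv : deriv (profile A a m) =ᶠ[𝓝 ξ]
      fun x => m * a * (exp (a * x) * profile A a (m - 1) x) := by
    filter_upwards [hpos] with x hx
    rw [(hasDerivAt_profile hx).deriv, profile]
    ring
  have hexp : HasDerivAt (fun x => exp (a * x)) (a * exp (a * ξ)) ξ := by
    simpa [mul_comm] using ((hasDerivAt_id ξ).const_mul a).exp
  have hpow : HasDerivAt (profile A a (m - 1))
      ((m - 1) * a * exp (a * ξ) * (-A + exp (a * ξ)) ^ (m - 1 - 1)) ξ :=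
    hasDerivAt_profile h
  have hprod : HasDerivAt (fun x => m * a * (exp (a * x) * profile A a (m - 1) x)) _ ξ :=
    (hexp.mul hpow).const_mul (m * a)
  rw [hderiv.deriv_eq, hprod.deriv, sub_sub, one_add_one_eq_two, profile]
  ring

theorem profile_ode {p k q b : ℝ} (hA : p * A ^ 2 = k) (hmq : m * q = -2)
    (hsq : b * m * a = m ^ 2 * a ^ 2 + p) (hlin : b * m * a = m * a ^ 2 + 2 * p)
    (h : 0 < -A + exp (a * ξ)) :
    b * deriv (profile A a m) ξ =
      deriv (deriv (profile A a m)) ξ + (p - k * profile A a m ξ ^ q) * profile A a m ξ := by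
  rw [(hasDerivAt_profile h).deriv, deriv_deriv_profile h, profile]
  generalize hw : -A + exp (a * ξ) = w at h ⊢
  have hE : exp (a * ξ) = w + A := by rw [← hw]; ring
  have hw1 : w ^ (m - 1) = w ^ m / w := by rw [rpow_sub h, rpow_one]
  have hw2 : w ^ (m - 2) = w ^ m / w ^ 2 := by rw [rpow_sub h, rpow_two]
  have hwq : (w ^ m) ^ q = (w ^ 2)⁻¹ := by
    rw [← rpow_mul h.le, hmq, rpow_neg h.le, rpow_two]
  rw [hw1, hw2, hwq, hE]
  field_simp
  linear_combination (w + A) ^ 2 * hsq - A * (w + A) * hlin - hA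

theorem speed_balance {p q β ε : ℝ} (hq : q ≠ 0) (hε : ε ^ 2 = 1)
    (hβ : 2 * (q + 2) * β ^ 2 = p) :
    ε * (q + 4) * β * (-2 / q) * -(ε * q * β) = (-2 / q) ^ 2 * (-(ε * q * β)) ^ 2 + p ∧
      ε * (q + 4) * β * (-2 / q) * -(ε * q * β) = -2 / q * (-(ε * q * β)) ^ 2 + 2 * p := by
  constructor <;>
  · field_simp
    linear_combination (2 * (q + 2) * β ^ 2) * hε + hβ

end TravellingWave

open TravellingWave in
theorem travelling_wave_solution_minus_general
    (p q k c ε : ℝ)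
    (hp : 0 < p) (hk : 0 < k) (hq2 : 0 < q + 2) (hq : q ≠ 0)
    (hε : ε = 1 ∨ ε = -1)
    (β : ℝ) (hβ : β = Real.sqrt (p / (2 * (q + 2))))
    (u : ℝ → ℝ → ℝ)
    (hu : ∀ t r : ℝ, u t r =
      (-Real.sqrt (k / p)
        + Real.exp (-(ε * q * β) * (r + ε * (q + 4) * β * (t + c)))) ^ (-2 / q)) :
    ∀ t r : ℝ,
      0 < -Real.sqrt (k / p)
        + Real.exp (-(ε * q * β) * (r + ε * (q + 4) * β * (t + c))) →
      0 < u t r ∧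
      deriv (fun s => u s r) t =
        deriv (deriv (fun s => u t s)) r + (p - k * u t r ^ q) * u t r := by
  intro t r hw
  have hA : p * Real.sqrt (k / p) ^ 2 = k := by
    rw [Real.sq_sqrt (by positivity)]; field_simp
  have hβ2 : 2 * (q + 2) * β ^ 2 = p := by
    rw [hβ, Real.sq_sqrt (by positivity)]; field_simp
  have hε2 : ε ^ 2 = 1 := by rcases hε with rfl | rfl <;> norm_num
  have hmq : -2 / q * q = -2 := by field_simp
  obtain ⟨hsq, hlin⟩ := speed_balance hq hε2 hβ2
  obtain rfl : u = fun t r => profile (Real.sqrt (k / p)) (-(ε * q * β)) (-2 / q)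
      (r + ε * (q + 4) * β * (t + c)) := funext₂ hu
  exact ⟨Real.rpow_pos_of_pos hw _,
    deriv_travellingWave_eq_of_profile_ode (f := fun y => (p - k * y ^ q) * y)
      (hasDerivAt_profile hw).differentiableAt (profile_ode hA hmq hsq hlin hw)⟩

/-- Explicit travelling-wave solution of the reaction-diffusion equation with `n = 1`,
`q ≠ -2` (the branch with `-(k/p)^{1/2}` in the base). -/
theorem travelling_wave_solution_minus
    (p q k c ε : ℝ)
    (hp : 0 < p) (hk : 0 < k) (hq2 : 0 < q + 2) (hq : q ≠ 0) (hq1 : q ≠ -1)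
    (hε : ε = 1 ∨ ε = -1)
    (β : ℝ) (hβ : β = Real.sqrt (p / (2 * (q + 2))))
    (u : ℝ → ℝ → ℝ)
    (hu : ∀ t r : ℝ, u t r =
      (-Real.sqrt (k / p)
        + Real.exp (-(ε * q * β) * (r + ε * (q + 4) * β * (t + c)))) ^ (-2 / q)) :
    ∀ t r : ℝ,
      0 < -Real.sqrt (k / p)
        + Real.exp (-(ε * q * β) * (r + ε * (q + 4) * β * (t + c))) →
      0 < u t r ∧
      deriv (fun s => u s r) t =
        deriv (deriv (fun s => u t s)) r + (p - k * u t r ^ q) * u t r :=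
  travelling_wave_solution_minus_general p q k c ε hp hk hq2 hq hε β hβ u hu
end

section
/- Let p, q, k, c be real constants with p > 0, k > 0, q + 2 > 0, q ≠ 0, q ≠ −1, let n = 1, and let ε ∈ {1, −1}. Set β := (p/(2(q+2)))^{1/2} and define u(t,r) := ((k/p)^{1/2} + exp(−ε q β (r + ε (q+4) β (t+c))))^{−2/q}, where the real power with exponent −2/q is taken. Then u is positive and satisfies u_t = u_rr + (p − k u^q) u at every point (t,r) ∈ ℝ × ℝ. -/
/-!
`u` is a travelling wave `u t r = f (r + b (t + c))` with `b = ε (q + 4) β` and profile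
`f ξ = (A + exp (a ξ)) ^ m`, where `A = √(k/p)`, `a = -ε q β`, `m = -2/q`. The equation becomes the
profile ODE `b f' = f'' + (p - k f ^ q) f`. Writing `E = exp (a ξ)` and `S = A + E`, and using
`q m = -2` and `k = p A ^ 2`, the ODE divided by `E S ^ (m - 2)` is linear in `S` and `E`; its
coefficients vanish exactly when `m (m - 1) a ^ 2 = p` and `b m a = m a ^ 2 + 2 p`, which is what
`β ^ 2 = p / (2 (q + 2))` and `ε ^ 2 = 1` guarantee.
-/

open Real

theorem deriv_comp_const_add_mul_add (f : ℝ → ℝ) (r b c t : ℝ) :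
    deriv (fun s => f (r + b * (s + c))) t = b * deriv f (r + b * (t + c)) := by
  have hscale := deriv_comp_mul_left b (fun x => f (x + (r + b * c))) t
  simp only [deriv_comp_add_const, smul_eq_mul] at hscale
  simp only [show ∀ s, r + b * (s + c) = b * s + (r + b * c) from fun s => by ring]
  exact hscale

theorem deriv_deriv_comp_add_const (f : ℝ → ℝ) (d r : ℝ) :
    deriv (deriv fun s => f (s + d)) r = deriv (deriv f) (r + d) := by
  rw [funext (deriv_comp_add_const f d), deriv_comp_add_const]

section ExpProfile

variable {A : ℝ} (hA : 0 ≤ A) (a : ℝ)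
include hA

theorem hasDerivAt_const_add_exp_mul_rpow (m x : ℝ) :
    HasDerivAt (fun y => (A + exp (a * y)) ^ m)
      (m * a * exp (a * x) * (A + exp (a * x)) ^ (m - 1)) x := by
  have hexp : HasDerivAt (fun y => exp (a * y)) (exp (a * x) * a) x := by
    simpa using ((hasDerivAt_id x).const_mul a).exp
  convert (hexp.const_add A).rpow_const (p := m) (Or.inl (by positivity)) using 1
  ring

theorem deriv_deriv_const_add_exp_mul_rpow (m x : ℝ) :
    deriv (deriv fun y => (A + exp (a * y)) ^ m) x =
      m * a ^ 2 * exp (a * x) * (A + exp (a * x)) ^ (m - 1)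
        + m * (m - 1) * a ^ 2 * exp (a * x) ^ 2 * (A + exp (a * x)) ^ (m - 2) := by
  have hexp : HasDerivAt (fun y => exp (a * y)) (exp (a * x) * a) x := by
    simpa using ((hasDerivAt_id x).const_mul a).exp
  rw [funext fun y => (hasDerivAt_const_add_exp_mul_rpow hA a m y).deriv]
  have hprod : HasDerivAt (fun y => m * a * exp (a * y) * (A + exp (a * y)) ^ (m - 1))
      (m * a * (exp (a * x) * a) * (A + exp (a * x)) ^ (m - 1)
        + m * a * exp (a * x) * ((m - 1) * a * exp (a * x) * (A + exp (a * x)) ^ (m - 1 - 1))) x :=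
    (hexp.const_mul (m * a)).mul (hasDerivAt_const_add_exp_mul_rpow hA a (m - 1) x)
  rw [hprod.deriv, show m - 1 - 1 = m - 2 by ring]
  ring

end ExpProfile

theorem const_add_exp_mul_rpow_ode {A a b m p q k : ℝ} (hA : 0 ≤ A) (hqm : q * m = -2)
    (hk : k = p * A ^ 2) (hdiff : m * (m - 1) * a ^ 2 = p) (hdrift : b * m * a = m * a ^ 2 + 2 * p)
    (x : ℝ) :
    b * deriv (fun y => (A + exp (a * y)) ^ m) x =
      deriv (deriv fun y => (A + exp (a * y)) ^ m) x
        + (p - k * ((A + exp (a * x)) ^ m) ^ q) * (A + exp (a * x)) ^ m := by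
  rw [(hasDerivAt_const_add_exp_mul_rpow hA a m x).deriv,
    deriv_deriv_const_add_exp_mul_rpow hA a m x]
  set E := exp (a * x)
  have hS : 0 < A + E := by positivity
  set P := (A + E) ^ (m - 2)
  have hpow_sub_one : (A + E) ^ (m - 1) = P * (A + E) := by
    rw [← rpow_add_one hS.ne']; ring_nf
  have hpow : (A + E) ^ m = P * (A + E) ^ 2 := by
    rw [← rpow_natCast, ← rpow_add hS]; ring_nf
  have hreaction : ((A + E) ^ m) ^ q * (A + E) ^ m = P := by
    rw [← rpow_mul hS.le, ← rpow_add hS]; congr 1; linear_combination hqm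
  rw [sub_mul, mul_assoc k, hreaction, hpow_sub_one, hpow]
  linear_combination (P * E * (A + E)) * hdrift - (P * E ^ 2) * hdiff + P * hk

theorem travelling_wave_solution_plus_general
    (p q k c ε : ℝ)
    (hp : 0 < p) (hk : 0 < k) (hq2 : 0 < q + 2) (hq : q ≠ 0)
    (hε : ε = 1 ∨ ε = -1)
    (β : ℝ) (hβ : β = Real.sqrt (p / (2 * (q + 2))))
    (u : ℝ → ℝ → ℝ)
    (hu : ∀ t r : ℝ, u t r =
      (Real.sqrt (k / p)
        + Real.exp (-(ε * q * β) * (r + ε * (q + 4) * β * (t + c)))) ^ (-2 / q)) :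
    ∀ t r : ℝ,
      0 < u t r ∧
      deriv (fun s => u s r) t =
        deriv (deriv (fun s => u t s)) r + (p - k * u t r ^ q) * u t r := by
  have hε2 : ε ^ 2 = 1 := by rcases hε with rfl | rfl <;> norm_num
  have hβ2 : 2 * (q + 2) * β ^ 2 = p := by
    rw [hβ, sq_sqrt (by positivity)]; field_simp
  have hqm : q * (-2 / q) = -2 := by field_simp
  have hkA : k = p * √(k / p) ^ 2 := by
    rw [sq_sqrt (by positivity)]; field_simp
  obtain rfl : u = fun t r =>
      (√(k / p) + exp (-(ε * q * β) * (r + ε * (q + 4) * β * (t + c)))) ^ (-2 / q) := funext₂ hu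
  intro t r
  refine ⟨by positivity, ?_⟩
  rw [deriv_comp_const_add_mul_add (fun y => (√(k / p) + exp (-(ε * q * β) * y)) ^ (-2 / q)),
    deriv_deriv_comp_add_const (fun y => (√(k / p) + exp (-(ε * q * β) * y)) ^ (-2 / q))]
  refine const_add_exp_mul_rpow_ode (sqrt_nonneg _) hqm hkA ?_ ?_ _
  · linear_combination
      ε ^ 2 * β ^ 2 * (q * (-2 / q) - 2 - q) * hqm + 2 * (q + 2) * β ^ 2 * hε2 + hβ2
  · linear_combination
      -ε ^ 2 * β ^ 2 * (2 * q + 4) * hqm + 4 * (q + 2) * β ^ 2 * hε2 + 2 * hβ2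

/-- Explicit travelling-wave solution of the reaction-diffusion equation with `n = 1`,
`q ≠ -2` (the branch with `+(k/p)^{1/2}` in the base), valid on all of `ℝ × ℝ`. -/
theorem travelling_wave_solution_plus
    (p q k c ε : ℝ)
    (hp : 0 < p) (hk : 0 < k) (hq2 : 0 < q + 2) (hq : q ≠ 0) (hq1 : q ≠ -1)
    (hε : ε = 1 ∨ ε = -1)
    (β : ℝ) (hβ : β = Real.sqrt (p / (2 * (q + 2))))
    (u : ℝ → ℝ → ℝ)
    (hu : ∀ t r : ℝ, u t r =
      (Real.sqrt (k / p)
        + Real.exp (-(ε * q * β) * (r + ε * (q + 4) * β * (t + c)))) ^ (-2 / q)) :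
    ∀ t r : ℝ,
      0 < u t r ∧
      deriv (fun s => u s r) t =
        deriv (deriv (fun s => u t s)) r + (p - k * u t r ^ q) * u t r :=
  travelling_wave_solution_plus_general p q k c ε hp hk hq2 hq hε β hβ u hu
end

section
/- Let p, k, c, c₁ be real constants with p > 0 and k > 0, let n = 1 and q = 2, and let ε ∈ {1, −1}. Define u(t,r) := cosh((p/2)^{1/2}(r + c₁)) / ((k/p)^{1/2} sinh((p/2)^{1/2}(r + c₁)) + ε exp(−3p(t+c)/2)). Then at every point (t,r) ∈ ℝ × ℝ where the denominator (k/p)^{1/2} sinh((p/2)^{1/2}(r + c₁)) + ε exp(−3p(t+c)/2) is nonzero, the function u satisfies u_t = u_rr + (p − k u²) u. -/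
/-!
Write `θ = √(p/2) (r + c₁)`, `B = √(k/p)`, `E = ε exp(-3p(t+c)/2)` and `D = B sinh θ + E`.
Thanks to `cosh² θ - sinh² θ = 1`, the `r`-derivative of `u = cosh θ / D` is
`√(p/2) (E sinh θ - B) / D²`, and both sides of the equation reduce to `(3p/2) E cosh θ / D²`.
The only property of `E` that enters is `∂ₜE = -(3p/2) E`.
-/

open Real Filter Topology

lemma deriv_deriv_eq_of_eventually_hasDerivAt {f f' : ℝ → ℝ} {x f'' : ℝ}
    (hf : ∀ᶠ y in 𝓝 x, HasDerivAt f (f' y) y) (hf' : HasDerivAt f' f'' x) :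
    deriv (deriv f) x = f'' :=
  (EventuallyEq.deriv_eq (hf.mono fun _ hy => hy.deriv)).trans hf'.deriv

section CoshDivSinhAdd

variable (A B E c₁ : ℝ)

lemma hasDerivAt_mul_add_const (x : ℝ) : HasDerivAt (fun y => A * (y + c₁)) A x := by
  simpa using ((hasDerivAt_id x).add_const c₁).const_mul A

lemma hasDerivAt_cosh_div_sinh_add {x : ℝ} (hx : B * sinh (A * (x + c₁)) + E ≠ 0) :
    HasDerivAt (fun y => cosh (A * (y + c₁)) / (B * sinh (A * (y + c₁)) + E))
      (A * (E * sinh (A * (x + c₁)) - B) / (B * sinh (A * (x + c₁)) + E) ^ 2) x := by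
  have hθ := hasDerivAt_mul_add_const A c₁ x
  refine (((hasDerivAt_cosh _).comp x hθ).div
    ((((hasDerivAt_sinh _).comp x hθ).const_mul B).add_const E) hx).congr_deriv ?_
  simp only [Function.comp_apply]
  congr 1
  linear_combination (-(A * B)) * Real.cosh_sq (A * (x + c₁))

lemma hasDerivAt_sinh_sub_div_sq {x : ℝ} (hx : B * sinh (A * (x + c₁)) + E ≠ 0) :
    HasDerivAt (fun y => A * (E * sinh (A * (y + c₁)) - B) / (B * sinh (A * (y + c₁)) + E) ^ 2)
      (A ^ 2 * cosh (A * (x + c₁)) * (E ^ 2 - B * E * sinh (A * (x + c₁)) + 2 * B ^ 2)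
        / (B * sinh (A * (x + c₁)) + E) ^ 3) x := by
  have hθ := hasDerivAt_mul_add_const A c₁ x
  have hsinh := (hasDerivAt_sinh _).comp x hθ
  refine (((hsinh.const_mul E).sub_const B).const_mul A |>.div
    (((hsinh.const_mul B).add_const E).pow 2) (pow_ne_zero 2 hx)).congr_deriv ?_
  simp only [Function.comp_apply, Pi.pow_apply]
  field_simp
  ring

lemma deriv_deriv_cosh_div_sinh_add {x : ℝ} (hx : B * sinh (A * (x + c₁)) + E ≠ 0) :
    deriv (deriv fun y => cosh (A * (y + c₁)) / (B * sinh (A * (y + c₁)) + E)) x =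
      A ^ 2 * cosh (A * (x + c₁)) * (E ^ 2 - B * E * sinh (A * (x + c₁)) + 2 * B ^ 2)
        / (B * sinh (A * (x + c₁)) + E) ^ 3 := by
  have hne : ∀ᶠ y in 𝓝 x, B * sinh (A * (y + c₁)) + E ≠ 0 :=
    (by fun_prop : Continuous fun y => B * sinh (A * (y + c₁)) + E).continuousAt.eventually_ne hx
  exact deriv_deriv_eq_of_eventually_hasDerivAt
    (hne.mono fun y hy => hasDerivAt_cosh_div_sinh_add A B E c₁ hy)
    (hasDerivAt_sinh_sub_div_sq A B E c₁ hx)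

end CoshDivSinhAdd

lemma hasDerivAt_div_add_exp (C K ε p c t : ℝ)
    (ht : K + ε * exp (-(3 * p * (t + c)) / 2) ≠ 0) :
    HasDerivAt (fun s => C / (K + ε * exp (-(3 * p * (s + c)) / 2)))
      (3 * p / 2 * (ε * exp (-(3 * p * (t + c)) / 2)) * C
        / (K + ε * exp (-(3 * p * (t + c)) / 2)) ^ 2) t := by
  have hlin : HasDerivAt (fun s => -(3 * p * (s + c)) / 2) (-(3 * p) / 2) t := by
    simpa using ((((hasDerivAt_id t).add_const c).const_mul (3 * p)).neg).div_const 2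
  refine ((hasDerivAt_const t C).div
    ((((hasDerivAt_exp _).comp t hlin).const_mul ε).const_add K) ht).congr_deriv ?_
  simp only [Function.comp_apply]
  ring

lemma cosh_div_sinh_add_reaction (A B E θ : ℝ) (hD : B * sinh θ + E ≠ 0) :
    A ^ 2 * cosh θ * (E ^ 2 - B * E * sinh θ + 2 * B ^ 2) / (B * sinh θ + E) ^ 3
      + (2 * A ^ 2 - 2 * A ^ 2 * B ^ 2 * (cosh θ / (B * sinh θ + E)) ^ 2)
        * (cosh θ / (B * sinh θ + E))
      = 3 * A ^ 2 * E * cosh θ / (B * sinh θ + E) ^ 2 := by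
  field_simp
  linear_combination (-2 * A ^ 2 * B ^ 2) * Real.cosh_sq θ

theorem noninvariant_solution_cosh_general
    (p k c c₁ ε : ℝ) (hp : 0 < p) (hk : 0 < k)
    (u : ℝ → ℝ → ℝ)
    (hu : ∀ t r : ℝ, u t r =
      Real.cosh (Real.sqrt (p / 2) * (r + c₁)) /
        (Real.sqrt (k / p) * Real.sinh (Real.sqrt (p / 2) * (r + c₁))
          + ε * Real.exp (-(3 * p * (t + c)) / 2))) :
    ∀ t r : ℝ,
      Real.sqrt (k / p) * Real.sinh (Real.sqrt (p / 2) * (r + c₁))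
        + ε * Real.exp (-(3 * p * (t + c)) / 2) ≠ 0 →
      deriv (fun s => u s r) t =
        deriv (deriv (fun s => u t s)) r + (p - k * u t r ^ 2) * u t r := by
  intro t r hD
  set A := √(p / 2)
  set B := √(k / p)
  have hp_eq : p = 2 * A ^ 2 := by rw [sq_sqrt (by positivity)]; ring
  have hk_eq : k = 2 * A ^ 2 * B ^ 2 := by
    rw [← hp_eq, sq_sqrt (by positivity)]; field_simp
  have hut :=
    (hasDerivAt_div_add_exp (cosh (A * (r + c₁))) (B * sinh (A * (r + c₁))) ε p c t hD).deriv
  have hurr := deriv_deriv_cosh_div_sinh_add A B _ c₁ hD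
  simp only [hu]
  rw [hut, hurr]
  set E := ε * exp (-(3 * p * (t + c)) / 2)
  clear_value A B E
  subst hp_eq hk_eq
  rw [cosh_div_sinh_add_reaction A B E _ hD]
  ring

/-- Explicit non-invariant solution (cosh/sinh) of the reaction-diffusion equation with
`n = 1`, `q = 2`, `p > 0`. -/
theorem noninvariant_solution_cosh
    (p k c c₁ ε : ℝ) (hp : 0 < p) (hk : 0 < k) (hε : ε = 1 ∨ ε = -1)
    (u : ℝ → ℝ → ℝ)
    (hu : ∀ t r : ℝ, u t r =
      Real.cosh (Real.sqrt (p / 2) * (r + c₁)) /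
        (Real.sqrt (k / p) * Real.sinh (Real.sqrt (p / 2) * (r + c₁))
          + ε * Real.exp (-(3 * p * (t + c)) / 2))) :
    ∀ t r : ℝ,
      Real.sqrt (k / p) * Real.sinh (Real.sqrt (p / 2) * (r + c₁))
        + ε * Real.exp (-(3 * p * (t + c)) / 2) ≠ 0 →
      deriv (fun s => u s r) t =
        deriv (deriv (fun s => u t s)) r + (p - k * u t r ^ 2) * u t r :=
  noninvariant_solution_cosh_general p k c c₁ ε hp hk u hu
end

section
/- Let p, k, c, c₁ be real constants with p > 0 and k > 0, let n = 1 and q = 2, and let ε ∈ {1, −1}. Define u(t,r) := sinh((p/2)^{1/2}(r + c₁)) / ((k/p)^{1/2} cosh((p/2)^{1/2}(r + c₁)) + ε exp(−3p(t+c)/2)). Then at every point (t,r) ∈ ℝ × ℝ where the denominator (k/p)^{1/2} cosh((p/2)^{1/2}(r + c₁)) + ε exp(−3p(t+c)/2) is nonzero, the function u satisfies u_t = u_rr + (p − k u²) u. -/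
/-!
With `x = √(p/2) (r + c₁)`, `m = ε exp (-3p(t + c)/2)` and `b = √(k/p)`, the function `u` is the
profile `f(m, x) = sinh x / (b cosh x + m)`. Since `∂ₜm = -3 (p/2) m` and `∂ᵣ = √(p/2) ∂ₓ`, the
equation reduces to `-3m ∂ₘf = ∂ₓ²f + 2 (1 - b² f²) f`, a rational identity in `sinh x`, `cosh x`
and `m` that holds modulo `cosh² x - sinh² x = 1`.
-/

open Real Filter Topology

lemma deriv_comp_mul_add_const (g : ℝ → ℝ) (a c : ℝ) :
    deriv (fun r => g (a * (r + c))) = fun r => a * deriv g (a * (r + c)) := by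
  funext r
  rw [deriv_comp_add_const (fun y => g (a * y)), deriv_comp_mul_left, smul_eq_mul]

lemma deriv_deriv_comp_mul_add_const (g : ℝ → ℝ) (a c r : ℝ) :
    deriv (deriv fun r => g (a * (r + c))) r = a ^ 2 * deriv (deriv g) (a * (r + c)) := by
  simp only [deriv_comp_mul_add_const, deriv_const_mul_field', sq, mul_assoc]

noncomputable def sinhProfile (b m x : ℝ) : ℝ := sinh x / (b * cosh x + m)

section sinhProfile

variable {b m x : ℝ}

lemma hasDerivAt_sinhProfile (hD : b * cosh x + m ≠ 0) :
    HasDerivAt (sinhProfile b m) ((b + m * cosh x) / (b * cosh x + m) ^ 2) x := by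
  have hden : HasDerivAt (fun y => b * cosh y + m) (b * sinh x) x :=
    ((hasDerivAt_cosh x).const_mul b).add_const m
  refine ((hasDerivAt_sinh x).fun_div hden hD).congr_deriv ?_
  congr 1
  linear_combination b * cosh_sq_sub_sinh_sq x

lemma deriv_deriv_sinhProfile (hD : b * cosh x + m ≠ 0) :
    deriv (deriv (sinhProfile b m)) x =
      sinh x * (m ^ 2 - b * m * cosh x - 2 * b ^ 2) / (b * cosh x + m) ^ 3 := by
  have hcont : ContinuousAt (fun y => b * cosh y + m) x := by fun_prop
  have hderiv : deriv (sinhProfile b m) =ᶠ[𝓝 x]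
      fun y => (b + m * cosh y) / (b * cosh y + m) ^ 2 := by
    filter_upwards [hcont.eventually_ne hD] with y hy
    exact (hasDerivAt_sinhProfile hy).deriv
  have hnum : HasDerivAt (fun y => b + m * cosh y) (m * sinh x) x :=
    ((hasDerivAt_cosh x).const_mul m).const_add b
  have hden : HasDerivAt (fun y => (b * cosh y + m) ^ 2)
      (2 * (b * cosh x + m) * (b * sinh x)) x := by
    refine ((((hasDerivAt_cosh x).const_mul b).add_const m).fun_pow 2).congr_deriv ?_
    ring
  rw [hderiv.deriv_eq, (hnum.fun_div hden (pow_ne_zero 2 hD)).deriv]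
  field_simp
  ring

lemma hasDerivAt_sinhProfile_param (hD : b * cosh x + m ≠ 0) :
    HasDerivAt (fun m => sinhProfile b m x) (-sinh x / (b * cosh x + m) ^ 2) m := by
  have hden : HasDerivAt (fun m => b * cosh x + m) 1 m := (hasDerivAt_id m).const_add _
  refine ((hasDerivAt_const m (sinh x)).fun_div hden hD).congr_deriv ?_
  ring

lemma sinhProfile_equation (hD : b * cosh x + m ≠ 0) :
    -3 * m * (-sinh x / (b * cosh x + m) ^ 2) =
      deriv (deriv (sinhProfile b m)) x
        + 2 * (1 - b ^ 2 * sinhProfile b m x ^ 2) * sinhProfile b m x := by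
  rw [deriv_deriv_sinhProfile hD, sinhProfile]
  field_simp
  linear_combination (-2 * b ^ 2 * sinh x) * cosh_sq_sub_sinh_sq x

end sinhProfile

theorem noninvariant_solution_sinh_general
    (p k c c₁ ε : ℝ) (hp : 0 < p) (hk : 0 < k)
    (u : ℝ → ℝ → ℝ)
    (hu : ∀ t r : ℝ, u t r =
      Real.sinh (Real.sqrt (p / 2) * (r + c₁)) /
        (Real.sqrt (k / p) * Real.cosh (Real.sqrt (p / 2) * (r + c₁))
          + ε * Real.exp (-(3 * p * (t + c)) / 2))) :
    ∀ t r : ℝ,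
      Real.sqrt (k / p) * Real.cosh (Real.sqrt (p / 2) * (r + c₁))
        + ε * Real.exp (-(3 * p * (t + c)) / 2) ≠ 0 →
      deriv (fun s => u s r) t =
        deriv (deriv (fun s => u t s)) r + (p - k * u t r ^ 2) * u t r := by
  intro t r hD
  set a := √(p / 2)
  set b := √(k / p)
  set m : ℝ → ℝ := fun s => ε * exp (-(3 * p * (s + c)) / 2)
  have ha : a ^ 2 = p / 2 := sq_sqrt (by positivity)
  have hb : p * b ^ 2 = k := by rw [sq_sqrt (by positivity)]; field_simp
  obtain rfl : u = fun t r => sinhProfile b (m t) (a * (r + c₁)) := funext₂ hu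
  have hm : HasDerivAt m (-(3 * p / 2) * m t) t :=
    (((((hasDerivAt_id' t).add_const c).const_mul (3 * p)).fun_neg.div_const 2).exp.const_mul
      ε).congr_deriv (by ring)
  have hut := (hasDerivAt_sinhProfile_param hD).comp t hm
  simp only [Function.comp_def] at hut
  have hsolves := sinhProfile_equation hD
  beta_reduce
  rw [hut.deriv, deriv_deriv_comp_mul_add_const, ha]
  linear_combination (p / 2) * hsolves - sinhProfile b (m t) (a * (r + c₁)) ^ 3 * hb

/-- Explicit non-invariant solution (sinh/cosh) of the reaction-diffusion equation with
`n = 1`, `q = 2`, `p > 0`. -/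
theorem noninvariant_solution_sinh
    (p k c c₁ ε : ℝ) (hp : 0 < p) (hk : 0 < k) (hε : ε = 1 ∨ ε = -1)
    (u : ℝ → ℝ → ℝ)
    (hu : ∀ t r : ℝ, u t r =
      Real.sinh (Real.sqrt (p / 2) * (r + c₁)) /
        (Real.sqrt (k / p) * Real.cosh (Real.sqrt (p / 2) * (r + c₁))
          + ε * Real.exp (-(3 * p * (t + c)) / 2))) :
    ∀ t r : ℝ,
      Real.sqrt (k / p) * Real.cosh (Real.sqrt (p / 2) * (r + c₁))
        + ε * Real.exp (-(3 * p * (t + c)) / 2) ≠ 0 →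
      deriv (fun s => u s r) t =
        deriv (deriv (fun s => u t s)) r + (p - k * u t r ^ 2) * u t r :=
  noninvariant_solution_sinh_general p k c c₁ ε hp hk u hu
end

section
/- Let p, k, c, c₁ be real constants with p < 0 and k > 0, let n = 1 and q = 2, and let ε ∈ {1, −1}. Define u(t,r) := cos((−p/2)^{1/2}(r + c₁)) / ((−k/p)^{1/2} sin((−p/2)^{1/2}(r + c₁)) + ε exp(−3p(t+c)/2)). Then at every point (t,r) ∈ ℝ × ℝ where the denominator (−k/p)^{1/2} sin((−p/2)^{1/2}(r + c₁)) + ε exp(−3p(t+c)/2) is nonzero, the function u satisfies u_t = u_rr + (p − k u²) u. -/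
/-! With `a = √(-p/2)` and `b = √(-k/p)` one has `p = -2a²`, `k = 2a²b²`, and the exponential
`E(t) = exp (-3p(t+c)/2)` satisfies `E' = 3a²E`. At fixed `t` the solution is the profile
`cos θ / (b sin θ + K)` with `θ = a(r + c₁)` and `K = εE(t)`, whose `r`-derivatives simplify by
`sin² + cos² = 1`; the equation then becomes a polynomial identity in `sin θ`, `cos θ`, `K`, which
again holds modulo `sin² + cos² = 1`. -/

open Real Filter Topology

noncomputable def trigProfile (a b c₁ K x : ℝ) : ℝ :=
  cos (a * (x + c₁)) / (b * sin (a * (x + c₁)) + K)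

section trigProfile

variable (a b c₁ K : ℝ) {x : ℝ}

theorem hasDerivAt_trigProfile (hx : b * sin (a * (x + c₁)) + K ≠ 0) :
    HasDerivAt (trigProfile a b c₁ K)
      (-a * (b + K * sin (a * (x + c₁))) / (b * sin (a * (x + c₁)) + K) ^ 2) x := by
  have hθ : HasDerivAt (fun y => a * (y + c₁)) a x := by
    simpa using ((hasDerivAt_id x).add_const c₁).const_mul a
  refine (hθ.cos.fun_div ((hθ.sin.const_mul b).add_const K) hx).congr_deriv ?_
  rw [div_left_inj' (pow_ne_zero 2 hx)]
  linear_combination (-a * b) * sin_sq_add_cos_sq (a * (x + c₁))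

theorem deriv_deriv_trigProfile (hx : b * sin (a * (x + c₁)) + K ≠ 0) :
    deriv (deriv (trigProfile a b c₁ K)) x =
      -a ^ 2 * cos (a * (x + c₁)) * (K ^ 2 - b * K * sin (a * (x + c₁)) - 2 * b ^ 2) /
        (b * sin (a * (x + c₁)) + K) ^ 3 := by
  have hθ : HasDerivAt (fun y => a * (y + c₁)) a x := by
    simpa using ((hasDerivAt_id x).add_const c₁).const_mul a
  have hopen : IsOpen {y | b * sin (a * (y + c₁)) + K ≠ 0} :=
    isOpen_ne.preimage (by fun_prop)
  have hderiv : deriv (trigProfile a b c₁ K) =ᶠ[𝓝 x]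
      fun y => -a * (b + K * sin (a * (y + c₁))) / (b * sin (a * (y + c₁)) + K) ^ 2 :=
    eventuallyEq_of_mem (hopen.mem_nhds hx) fun y hy => (hasDerivAt_trigProfile a b c₁ K hy).deriv
  rw [hderiv.deriv_eq]
  have hsecond := (((hθ.sin.const_mul K).const_add b).const_mul (-a)).fun_div
    (((hθ.sin.const_mul b).add_const K).fun_pow 2) (pow_ne_zero 2 hx)
  rw [hsecond.deriv]
  field_simp
  ring

end trigProfile

theorem hasDerivAt_const_div_add_mul_exp {g : ℝ → ℝ} {g' t : ℝ} (A B ε : ℝ)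
    (hg : HasDerivAt g g' t) (ht : B + ε * exp (g t) ≠ 0) :
    HasDerivAt (fun s => A / (B + ε * exp (g s)))
      (-(A * (ε * exp (g t) * g')) / (B + ε * exp (g t)) ^ 2) t :=
  ((hasDerivAt_const t A).fun_div ((hg.exp.const_mul ε).const_add B) ht).congr_deriv (by ring)

theorem cos_div_sin_add_balance {a b S C K : ℝ} (hSC : S ^ 2 + C ^ 2 = 1) (hD : b * S + K ≠ 0) :
    -(C * (K * (3 * a ^ 2))) / (b * S + K) ^ 2 =
      -a ^ 2 * C * (K ^ 2 - b * K * S - 2 * b ^ 2) / (b * S + K) ^ 3 +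
        (-2 * a ^ 2 - 2 * a ^ 2 * b ^ 2 * (C / (b * S + K)) ^ 2) * (C / (b * S + K)) := by
  field_simp
  linear_combination (2 * a ^ 2 * b ^ 2 * C) * hSC

theorem noninvariant_solution_cos_general
    (p k c c₁ ε : ℝ) (hp : p < 0) (hk : 0 < k)
    (u : ℝ → ℝ → ℝ)
    (hu : ∀ t r : ℝ, u t r =
      Real.cos (Real.sqrt (-p / 2) * (r + c₁)) /
        (Real.sqrt (-k / p) * Real.sin (Real.sqrt (-p / 2) * (r + c₁))
          + ε * Real.exp (-(3 * p * (t + c)) / 2))) :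
    ∀ t r : ℝ,
      Real.sqrt (-k / p) * Real.sin (Real.sqrt (-p / 2) * (r + c₁))
        + ε * Real.exp (-(3 * p * (t + c)) / 2) ≠ 0 →
      deriv (fun s => u s r) t =
        deriv (deriv (fun s => u t s)) r + (p - k * u t r ^ 2) * u t r := by
  intro t r hD
  set a := √(-p / 2)
  set b := √(-k / p)
  have ha2 : a ^ 2 = -p / 2 := sq_sqrt (by linarith)
  have hb2 : b ^ 2 = -k / p := sq_sqrt (div_nonneg_of_nonpos (by linarith) hp.le)
  have hpa : p = -2 * a ^ 2 := by rw [ha2]; ring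
  have hkb : k = 2 * a ^ 2 * b ^ 2 := by rw [ha2, hb2]; field_simp [hp.ne]
  have hrate : HasDerivAt (fun s => -(3 * p * (s + c)) / 2) (3 * a ^ 2) t := by
    refine ((((hasDerivAt_id t).add_const c).const_mul (3 * p)).neg.div_const 2).congr_deriv ?_
    rw [hpa]; ring
  have htime : (fun s => u s r) = fun s =>
      cos (a * (r + c₁)) / (b * sin (a * (r + c₁)) + ε * exp (-(3 * p * (s + c)) / 2)) :=
    funext fun s => hu s r
  have hspace : (fun s => u t s) = trigProfile a b c₁ (ε * exp (-(3 * p * (t + c)) / 2)) :=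
    funext fun s => hu t s
  rw [htime, (hasDerivAt_const_div_add_mul_exp _ _ ε hrate hD).deriv, hspace,
    deriv_deriv_trigProfile _ _ _ _ hD, hu t r, hkb]
  set K := ε * exp (-(3 * p * (t + c)) / 2)
  rw [hpa]
  exact cos_div_sin_add_balance (sin_sq_add_cos_sq _) hD

/-- Explicit non-invariant solution (cos/sin) of the reaction-diffusion equation with
`n = 1`, `q = 2`, `p < 0`. -/
theorem noninvariant_solution_cos
    (p k c c₁ ε : ℝ) (hp : p < 0) (hk : 0 < k) (hε : ε = 1 ∨ ε = -1)
    (u : ℝ → ℝ → ℝ)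
    (hu : ∀ t r : ℝ, u t r =
      Real.cos (Real.sqrt (-p / 2) * (r + c₁)) /
        (Real.sqrt (-k / p) * Real.sin (Real.sqrt (-p / 2) * (r + c₁))
          + ε * Real.exp (-(3 * p * (t + c)) / 2))) :
    ∀ t r : ℝ,
      Real.sqrt (-k / p) * Real.sin (Real.sqrt (-p / 2) * (r + c₁))
        + ε * Real.exp (-(3 * p * (t + c)) / 2) ≠ 0 →
      deriv (fun s => u s r) t =
        deriv (deriv (fun s => u t s)) r + (p - k * u t r ^ 2) * u t r :=
  noninvariant_solution_cos_general p k c c₁ ε hp hk u hu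
end

section
/- Let p, k, c, c₁ be real constants with p < 0 and k > 0, let n = 1 and q = 2, and let ε ∈ {1, −1}. Define u(t,r) := sin((−p/2)^{1/2}(r + c₁)) / ((−k/p)^{1/2} cos((−p/2)^{1/2}(r + c₁)) − ε exp(−3p(t+c)/2)). Then at every point (t,r) ∈ ℝ × ℝ where the denominator (−k/p)^{1/2} cos((−p/2)^{1/2}(r + c₁)) − ε exp(−3p(t+c)/2) is nonzero, the function u satisfies u_t = u_rr + (p − k u²) u. -/
/-!
With `θ = a (x + c₁)`, `e = ε exp (3 a² (t + c))` and `D = b cos θ - e`, the function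
`u = sin θ / D` has `u_t = 3 a² e sin θ / D²` and, using `sin² θ + cos² θ = 1`,
`u_x = a (b - e cos θ) / D²` and `u_xx = a² sin θ (e D + 2 b (b - e cos θ)) / D³`.
For `p = -2 a²` and `k = 2 a² b²` the reaction term is `-2 a² sin θ (D² + b² sin² θ) / D³`,
and the sum collapses to `3 a² e sin θ / D²`. The theorem is the case
`a = √(-p/2)`, `b = √(-k/p)`, where `p < 0 < k` gives `a² = -p/2` and `b² = -k/p`.
-/

open Real Filter Topology

noncomputable def sinSolution (a b c c₁ ε t x : ℝ) : ℝ :=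
  sin (a * (x + c₁)) / (b * cos (a * (x + c₁)) - ε * exp (3 * a ^ 2 * (t + c)))

section Space

variable (a b c₁ e : ℝ)

lemma hasDerivAt_sin_div_cos_sub {x : ℝ} (hD : b * cos (a * (x + c₁)) - e ≠ 0) :
    HasDerivAt (fun y => sin (a * (y + c₁)) / (b * cos (a * (y + c₁)) - e))
      (a * (b - e * cos (a * (x + c₁))) / (b * cos (a * (x + c₁)) - e) ^ 2) x := by
  have hθ : HasDerivAt (fun y => a * (y + c₁)) a x := by
    simpa using ((hasDerivAt_id x).add_const c₁).const_mul a
  refine (hθ.sin.fun_div ((hθ.cos.const_mul b).sub_const e) hD).congr_deriv ?_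
  congr 1
  linear_combination a * b * sin_sq_add_cos_sq (a * (x + c₁))

lemma hasDerivAt_cos_sub_div_sq {x : ℝ} (hD : b * cos (a * (x + c₁)) - e ≠ 0) :
    HasDerivAt (fun y => a * (b - e * cos (a * (y + c₁))) / (b * cos (a * (y + c₁)) - e) ^ 2)
      (a ^ 2 * sin (a * (x + c₁)) *
          (e * (b * cos (a * (x + c₁)) - e) + 2 * b * (b - e * cos (a * (x + c₁)))) /
        (b * cos (a * (x + c₁)) - e) ^ 3) x := by
  have hθ : HasDerivAt (fun y => a * (y + c₁)) a x := by
    simpa using ((hasDerivAt_id x).add_const c₁).const_mul a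
  have hN := ((hθ.cos.const_mul e).const_sub b).const_mul a
  have hD2 := ((hθ.cos.const_mul b).sub_const e).fun_pow 2
  refine (hN.fun_div hD2 (pow_ne_zero 2 hD)).congr_deriv ?_
  field_simp
  ring

lemma deriv_deriv_sin_div_cos_sub {x : ℝ} (hD : b * cos (a * (x + c₁)) - e ≠ 0) :
    deriv (deriv fun y => sin (a * (y + c₁)) / (b * cos (a * (y + c₁)) - e)) x =
      a ^ 2 * sin (a * (x + c₁)) *
          (e * (b * cos (a * (x + c₁)) - e) + 2 * b * (b - e * cos (a * (x + c₁)))) /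
        (b * cos (a * (x + c₁)) - e) ^ 3 := by
  have hopen : IsOpen {y : ℝ | b * cos (a * (y + c₁)) - e ≠ 0} :=
    isOpen_ne.preimage (by fun_prop)
  have hderiv : (deriv fun y => sin (a * (y + c₁)) / (b * cos (a * (y + c₁)) - e)) =ᶠ[𝓝 x]
      fun y => a * (b - e * cos (a * (y + c₁))) / (b * cos (a * (y + c₁)) - e) ^ 2 :=
    eventually_of_mem (hopen.mem_nhds hD) fun y hy =>
      (hasDerivAt_sin_div_cos_sub a b c₁ e hy).deriv
  rw [hderiv.deriv_eq, (hasDerivAt_cos_sub_div_sq a b c₁ e hD).deriv]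

end Space

lemma hasDerivAt_div_sub_exp (s m ε l c t : ℝ) (hD : m - ε * exp (l * (t + c)) ≠ 0) :
    HasDerivAt (fun τ => s / (m - ε * exp (l * (τ + c))))
      (s * (ε * l * exp (l * (t + c))) / (m - ε * exp (l * (t + c))) ^ 2) t := by
  have hlin : HasDerivAt (fun τ => l * (τ + c)) l t := by
    simpa using ((hasDerivAt_id t).add_const c).const_mul l
  refine ((hasDerivAt_const t s).fun_div ((hlin.exp.const_mul ε).const_sub m) hD).congr_deriv ?_
  ring

theorem sinSolution_satisfies_pde (a b c c₁ ε t x : ℝ)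
    (hD : b * cos (a * (x + c₁)) - ε * exp (3 * a ^ 2 * (t + c)) ≠ 0) :
    deriv (fun s => sinSolution a b c c₁ ε s x) t =
      deriv (deriv (sinSolution a b c c₁ ε t)) x +
        (-2 * a ^ 2 - 2 * a ^ 2 * b ^ 2 * sinSolution a b c c₁ ε t x ^ 2) *
          sinSolution a b c c₁ ε t x := by
  unfold sinSolution
  rw [(hasDerivAt_div_sub_exp _ _ ε _ c t hD).deriv, deriv_deriv_sin_div_cos_sub a b c₁ _ hD]
  generalize exp (3 * a ^ 2 * (t + c)) = E at hD ⊢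
  field_simp
  linear_combination 2 * a ^ 2 * b ^ 2 * sin (a * (x + c₁)) * sin_sq_add_cos_sq (a * (x + c₁))

theorem noninvariant_solution_sin_general
    (p k c c₁ ε : ℝ) (hp : p < 0) (hk : 0 < k)
    (u : ℝ → ℝ → ℝ)
    (hu : ∀ t r : ℝ, u t r =
      Real.sin (Real.sqrt (-p / 2) * (r + c₁)) /
        (Real.sqrt (-k / p) * Real.cos (Real.sqrt (-p / 2) * (r + c₁))
          - ε * Real.exp (-(3 * p * (t + c)) / 2))) :
    ∀ t r : ℝ,
      Real.sqrt (-k / p) * Real.cos (Real.sqrt (-p / 2) * (r + c₁))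
        - ε * Real.exp (-(3 * p * (t + c)) / 2) ≠ 0 →
      deriv (fun s => u s r) t =
        deriv (deriv (fun s => u t s)) r + (p - k * u t r ^ 2) * u t r := by
  set a := √(-p / 2)
  set b := √(-k / p)
  have ha : a ^ 2 = -p / 2 := sq_sqrt (by linarith)
  have hb : b ^ 2 = -k / p := sq_sqrt (div_nonneg_of_nonpos (by linarith) hp.le)
  have hexp (t : ℝ) : -(3 * p * (t + c)) / 2 = 3 * a ^ 2 * (t + c) := by rw [ha]; ring
  have hu' : u = sinSolution a b c c₁ ε := by
    funext t r
    rw [hu, sinSolution, hexp]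
  have hp' : p = -2 * a ^ 2 := by rw [ha]; ring
  have hk' : k = 2 * a ^ 2 * b ^ 2 := by rw [ha, hb]; field_simp [hp.ne]
  intro t r hD
  rw [hexp] at hD
  rw [hu', hp', hk']
  exact sinSolution_satisfies_pde a b c c₁ ε t r hD

/-- Explicit non-invariant solution (sin/cos) of the reaction-diffusion equation with
`n = 1`, `q = 2`, `p < 0`. -/
theorem noninvariant_solution_sin
    (p k c c₁ ε : ℝ) (hp : p < 0) (hk : 0 < k) (hε : ε = 1 ∨ ε = -1)
    (u : ℝ → ℝ → ℝ)
    (hu : ∀ t r : ℝ, u t r =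
      Real.sin (Real.sqrt (-p / 2) * (r + c₁)) /
        (Real.sqrt (-k / p) * Real.cos (Real.sqrt (-p / 2) * (r + c₁))
          - ε * Real.exp (-(3 * p * (t + c)) / 2))) :
    ∀ t r : ℝ,
      Real.sqrt (-k / p) * Real.cos (Real.sqrt (-p / 2) * (r + c₁))
        - ε * Real.exp (-(3 * p * (t + c)) / 2) ≠ 0 →
      deriv (fun s => u s r) t =
        deriv (deriv (fun s => u t s)) r + (p - k * u t r ^ 2) * u t r :=
  noninvariant_solution_sin_general p k c c₁ ε hp hk u hu
end
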